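/- arXiv:1508.06537 — 11 statements merged into one kernel-verified Lean document; each statement's English description precedes it below -/
import Mathlib

section
/- Let L(y)(x) = Σ_{k=1}^∞ M_k(x) y^{(k)}(x) with deg M_k ≤ k, and set λ_n = Σ_{k=1}^n (n!/(n-k)!) m_{kk} for n ≥ 1, λ_0 = 0. Assume λ_m ≠ λ_n for all m ≠ n. Then for each n, any two polynomial solutions of L(y) = λ_n y are scalar multiples of each other, and every nonzero polynomial solution has degree exactly n. -/
open Polynomial Finset

/-- The operator `L(y) = ∑_{k≥1} Mₖ · y⁽ᵏ⁾`; the sum is finite on each polynomial. -/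
noncomputable def LOp (M : ℕ → Polynomial ℂ) (y : Polynomial ℂ) : Polynomial ℂ :=
  ∑ k ∈ Finset.Icc 1 (y.natDegree + 1), M k * (Polynomial.derivative^[k] y)

/-- `λ_n = ∑_{k=1}^n (n!/(n-k)!) m_{kk}` (so `λ_0 = 0`). -/
noncomputable def lamSeq (M : ℕ → Polynomial ℂ) (n : ℕ) : ℂ :=
  ∑ k ∈ Finset.Icc 1 n, (Nat.descFactorial n k : ℂ) * (M k).coeff k

lemma lop_eq (M : ℕ → Polynomial ℂ) (y : Polynomial ℂ) (N : ℕ) (h : y.natDegree ≤ N) :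
    LOp M y = ∑ k ∈ Finset.Icc 1 (N + 1), M k * (Polynomial.derivative^[k] y) := by
  unfold LOp
  apply Finset.sum_subset
  · exact Finset.Icc_subset_Icc_right (by omega)
  · intro k hk hk'
    simp only [Finset.mem_Icc] at hk hk'
    rw [Polynomial.iterate_derivative_eq_zero (by omega), mul_zero]

lemma coeff_lop (M : ℕ → Polynomial ℂ) (hdeg : ∀ k, (M k).degree ≤ (k : ℕ))
    (y : Polynomial ℂ) (d : ℕ) (hd : y.natDegree ≤ d) :
    (LOp M y).coeff d = lamSeq M d * y.coeff d := by
  rw [lop_eq M y d hd, Polynomial.finset_sum_coeff]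
  have hstep : ∑ k ∈ Finset.Icc 1 (d + 1), (M k * Polynomial.derivative^[k] y).coeff d
      = ∑ k ∈ Finset.Icc 1 d, (M k * Polynomial.derivative^[k] y).coeff d := by
    symm
    apply Finset.sum_subset (Finset.Icc_subset_Icc_right (by omega))
    intro k hk hk'
    simp only [Finset.mem_Icc] at hk hk'
    rw [Polynomial.iterate_derivative_eq_zero (by omega), mul_zero, Polynomial.coeff_zero]
  rw [hstep, lamSeq, Finset.sum_mul]
  apply Finset.sum_congr rfl
  intro k hk
  simp only [Finset.mem_Icc] at hk
  rw [Polynomial.coeff_mul]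
  rw [Finset.sum_eq_single_of_mem (k, d - k)]
  · rw [Polynomial.coeff_iterate_derivative]
    have : d - k + k = d := by omega
    rw [this, nsmul_eq_mul]
    push_cast
    ring
  · simp only [Finset.HasAntidiagonal.mem_antidiagonal]; omega
  · rintro ⟨i, j⟩ hij hne
    simp only [Finset.HasAntidiagonal.mem_antidiagonal] at hij
    rcases lt_or_ge k i with hik | hik
    · have : (M k).coeff i = 0 := by
        apply Polynomial.coeff_eq_zero_of_degree_lt
        exact lt_of_le_of_lt (hdeg k) (by exact_mod_cast hik)
      rw [this, zero_mul]
    · have hik' : i < k := by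
        rcases lt_or_eq_of_le hik with h | h
        · exact h
        · exfalso; apply hne; rw [Prod.ext_iff]; constructor <;> simp <;> omega
      have : (Polynomial.derivative^[k] y).coeff j = 0 := by
        rw [Polynomial.coeff_iterate_derivative]
        have : y.coeff (j + k) = 0 := by
          apply Polynomial.coeff_eq_zero_of_natDegree_lt; omega
        rw [this, smul_zero]
      rw [this, mul_zero]

lemma lop_solution_degree (M : ℕ → Polynomial ℂ)
    (hdeg : ∀ k, (M k).degree ≤ (k : ℕ))
    (hsep : ∀ m n : ℕ, m ≠ n → lamSeq M m ≠ lamSeq M n) (n : ℕ)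
    (y : Polynomial ℂ) (hy : LOp M y = lamSeq M n • y) (hy0 : y ≠ 0) :
    y.degree = (n : ℕ) := by
  set d := y.natDegree with hdd
  have hc := coeff_lop M hdeg y d le_rfl
  rw [hy, Polynomial.coeff_smul, smul_eq_mul] at hc
  have hlc : y.coeff d ≠ 0 := Polynomial.leadingCoeff_ne_zero.mpr hy0
  have : lamSeq M n = lamSeq M d := by
    exact mul_right_cancel₀ hlc hc
  have hdn : d = n := by
    by_contra h
    exact hsep n d (fun hh => h hh.symm) this
  rw [Polynomial.degree_eq_natDegree hy0]
  exact_mod_cast hdn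

theorem stmt_1 (M : ℕ → Polynomial ℂ)
    (hdeg : ∀ k, (M k).degree ≤ (k : ℕ))
    (hsep : ∀ m n : ℕ, m ≠ n → lamSeq M m ≠ lamSeq M n) (n : ℕ) :
    (∀ y z : Polynomial ℂ, LOp M y = lamSeq M n • y → LOp M z = lamSeq M n • z →
        (∃ c : ℂ, z = c • y) ∨ (∃ c : ℂ, y = c • z)) ∧
    (∀ y : Polynomial ℂ, LOp M y = lamSeq M n • y → y ≠ 0 → y.degree = (n : ℕ)) := by
  constructor
  · intro y z hy hz
    by_cases hy0 : y = 0
    · right; exact ⟨0, by simp [hy0]⟩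
    by_cases hz0 : z = 0
    · left; exact ⟨0, by simp [hz0]⟩
    have hdy : y.degree = (n : ℕ) := lop_solution_degree M hdeg hsep n y hy hy0
    have hdz : z.degree = (n : ℕ) := lop_solution_degree M hdeg hsep n z hz hz0
    have hny : y.natDegree = n := Polynomial.natDegree_eq_of_degree_eq_some hdy
    have hnz : z.natDegree = n := Polynomial.natDegree_eq_of_degree_eq_some hdz
    set a := y.leadingCoeff with ha
    set b := z.leadingCoeff with hb
    have ha0 : a ≠ 0 := Polynomial.leadingCoeff_ne_zero.mpr hy0
    have hb0 : b ≠ 0 := Polynomial.leadingCoeff_ne_zero.mpr hz0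
    set w := b • y - a • z with hw
    set N := max y.natDegree z.natDegree with hN
    have hwN : w.natDegree ≤ N := by
      apply le_trans (Polynomial.natDegree_sub_le _ _)
      simp only [max_le_iff]
      constructor
      · exact le_trans (Polynomial.natDegree_smul_le _ _) (le_max_left _ _)
      · exact le_trans (Polynomial.natDegree_smul_le _ _) (le_max_right _ _)
    have hLw : LOp M w = lamSeq M n • w := by
      rw [lop_eq M w N hwN]
      have : ∀ k, M k * Polynomial.derivative^[k] w
          = b • (M k * Polynomial.derivative^[k] y) - a • (M k * Polynomial.derivative^[k] z) := by
        intro k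
        rw [hw, Polynomial.iterate_derivative_sub, Polynomial.iterate_derivative_smul,
          Polynomial.iterate_derivative_smul, mul_sub, mul_smul_comm, mul_smul_comm]
      simp_rw [this]
      rw [Finset.sum_sub_distrib, ← Finset.smul_sum, ← Finset.smul_sum,
        ← lop_eq M y N (le_max_left _ _), ← lop_eq M z N (le_max_right _ _), hy, hz,
        hw, smul_sub]
      rw [smul_comm b, smul_comm a]
    by_cases hw0 : w = 0
    · left
      refine ⟨a⁻¹ * b, ?_⟩
      have : b • y = a • z := by
        have := sub_eq_zero.mp (hw ▸ hw0)
        exact this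
      rw [mul_smul, this, smul_smul, inv_mul_cancel₀ ha0, one_smul]
    · exfalso
      have hdw : w.degree = (n : ℕ) := lop_solution_degree M hdeg hsep n w hLw hw0
      have hnw : w.natDegree = n := Polynomial.natDegree_eq_of_degree_eq_some hdw
      have hcw : w.coeff n = 0 := by
        rw [hw]
        simp only [Polynomial.coeff_sub, Polynomial.coeff_smul, smul_eq_mul]
        have hy' : y.coeff n = a := by rw [ha, Polynomial.leadingCoeff, hny]
        have hz' : z.coeff n = b := by rw [hb, Polynomial.leadingCoeff, hnz]
        rw [hy', hz']; ring
      have : w.leadingCoeff ≠ 0 := Polynomial.leadingCoeff_ne_zero.mpr hw0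
      rw [Polynomial.leadingCoeff, hnw] at this
      exact this hcw
  · exact fun y hy hy0 => lop_solution_degree M hdeg hsep n y hy hy0
end

section
/- Let L(y)(x) = Σ_{k=1}^∞ M_k(x) y^{(k)}(x) with deg M_k ≤ k and λ_n defined as λ_n = Σ_{k=1}^n (n!/(n-k)!) m_{kk}. If λ ∈ ℂ satisfies λ ≠ λ_n for every n ∈ ℕ₀, then the only polynomial y with L(y) = λ y is y ≡ 0. -/
open Polynomial Finset

theorem stmt_2 (M : ℕ → Polynomial ℂ)
    (hdeg : ∀ k, (M k).degree ≤ (k : ℕ))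
    (lam : ℂ) (hlam : ∀ n : ℕ, lam ≠ lamSeq M n)
    (y : Polynomial ℂ) (hy : LOp M y = lam • y) :
    y = 0 := by
  by_contra hne
  set n := y.natDegree with hn
  have hcoeff : (LOp M y).coeff n = lamSeq M n * y.coeff n := by
    have hsum : (LOp M y).coeff n
        = ∑ k ∈ Finset.Icc 1 (n + 1), (M k * (Polynomial.derivative^[k] y)).coeff n := by
      simp [LOp, Polynomial.finset_sum_coeff]
      rfl
    rw [hsum]
    have hterm : ∀ k ∈ Finset.Icc 1 (n + 1),
        (M k * (Polynomial.derivative^[k] y)).coeff n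
          = (Nat.descFactorial n k : ℂ) * (M k).coeff k * y.coeff n := by
      intro k hk
      rcases le_or_gt k n with hkn | hkn
      · have h1 : (M k).natDegree ≤ k := natDegree_le_iff_degree_le.mpr (hdeg k)
        have h2 : (Polynomial.derivative^[k] y).natDegree ≤ n - k :=
          Polynomial.natDegree_iterate_derivative y k
        have hadd : n = k + (n - k) := by omega
        rw [hadd, Polynomial.coeff_mul_add_eq_of_natDegree_le h1 h2,
          Polynomial.coeff_iterate_derivative]
        have e1 : n - k + k = n := by omega
        have e2 : k + (n - k) = n := by omega
        rw [e1, e2, nsmul_eq_mul]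
        ring
      · have : Polynomial.derivative^[k] y = 0 :=
          Polynomial.iterate_derivative_eq_zero hkn
        rw [this, mul_zero, Polynomial.coeff_zero,
          Nat.descFactorial_eq_zero_iff_lt.mpr hkn]
        simp
    rw [Finset.sum_congr rfl hterm]
    have hlast : ((Nat.descFactorial n (n+1) : ℂ)) * (M (n+1)).coeff (n+1) * y.coeff n = 0 := by
      simp [Nat.descFactorial_eq_zero_iff_lt.mpr (Nat.lt_succ_self n)]
    rw [Finset.sum_Icc_succ_top (by omega), hlast, add_zero, lamSeq, Finset.sum_mul]
  have hc : y.coeff n ≠ 0 := Polynomial.leadingCoeff_ne_zero.mpr hne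
  have : lam * y.coeff n = lamSeq M n * y.coeff n := by
    have := congrArg (fun p => Polynomial.coeff p n) hy
    simpa [hcoeff] using this.symm
  exact hlam n (mul_right_cancel₀ hc this)
end

section
/- Let (P_n) be an arbitrary sequence of polynomials with deg P_n = n, and let (λ_n) be complex scalars with λ_0 = 0, λ_n ≠ 0 for n ≥ 1, and λ_m ≠ λ_n for m ≠ n. Then there exists a unique sequence (M_k)_{k≥1} of polynomials with deg M_k ≤ k such that L(y) = Σ_{k=1}^∞ M_k y^{(k)} satisfies L(P_n) = λ_n P_n for all n ∈ ℕ₀. -/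
open Polynomial Finset

/-- The operator `L(y) = ∑_{k≥1} Mₖ · y⁽ᵏ⁾`, where `M k` here denotes the coefficient
polynomial `M_{k+1}` (so the sequence is indexed starting from `1`).  The sum is finite on
each polynomial. -/
noncomputable def LOp1 (M : ℕ → Polynomial ℂ) (y : Polynomial ℂ) : Polynomial ℂ :=
  ∑ k ∈ Finset.range (y.natDegree + 1), M k * (Polynomial.derivative^[k + 1] y)

/-- The constant value of the `(n+1)`-st derivative of `P (n+1)`. -/
noncomputable def stmt3c (P : ℕ → Polynomial ℂ) (n : ℕ) : ℂ :=
  (Polynomial.derivative^[n + 1] (P (n + 1))).coeff 0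

/-- Finite-prefix recursive construction of the coefficient sequence. -/
noncomputable def stmt3A (P : ℕ → Polynomial ℂ) (lam : ℕ → ℂ) : ℕ → ℕ → Polynomial ℂ
  | 0 => fun _ => 0
  | n + 1 => fun k =>
      if k = n then
        (stmt3c P n)⁻¹ •
          (lam (n + 1) • P (n + 1) -
            ∑ j ∈ Finset.range n, stmt3A P lam n j * Polynomial.derivative^[j + 1] (P (n + 1)))
      else stmt3A P lam n k

/-- The coefficient sequence. -/
noncomputable def stmt3M (P : ℕ → Polynomial ℂ) (lam : ℕ → ℂ) (n : ℕ) : Polynomial ℂ :=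
  stmt3A P lam (n + 1) n

lemma stmt3A_stable (P : ℕ → Polynomial ℂ) (lam : ℕ → ℂ) :
    ∀ m k, k < m → stmt3A P lam m k = stmt3M P lam k := by
  intro m
  induction m with
  | zero => intro k hk; omega
  | succ n ih =>
      intro k hk
      rcases eq_or_lt_of_le (Nat.lt_succ_iff.mp hk) with h | h
      · subst h; rfl
      · show stmt3A P lam (n + 1) k = _
        rw [stmt3A]
        simp only [if_neg (by omega : ¬ k = n)]
        exact ih k h

lemma stmt3M_eq (P : ℕ → Polynomial ℂ) (lam : ℕ → ℂ) (n : ℕ) :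
    stmt3M P lam n = (stmt3c P n)⁻¹ •
      (lam (n + 1) • P (n + 1) -
        ∑ j ∈ Finset.range n, stmt3M P lam j * Polynomial.derivative^[j + 1] (P (n + 1))) := by
  show stmt3A P lam (n + 1) n = _
  simp only [stmt3A]
  rw [if_true]
  congr 1
  congr 1
  refine Finset.sum_congr rfl fun j hj => ?_
  rw [stmt3A_stable P lam n j (Finset.mem_range.mp hj)]

lemma stmt3_deriv_eq_C (P : ℕ → Polynomial ℂ) (hP : ∀ n, (P n).degree = (n : ℕ)) (n : ℕ) :
    Polynomial.derivative^[n + 1] (P (n + 1)) = Polynomial.C (stmt3c P n) := by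
  have hnd : (P (n + 1)).natDegree = n + 1 := natDegree_eq_of_degree_eq_some (hP (n + 1))
  have h0 : (Polynomial.derivative^[n + 1] (P (n + 1))).natDegree = 0 := by
    have := Polynomial.natDegree_iterate_derivative (P (n + 1)) (n + 1)
    omega
  exact Polynomial.eq_C_of_natDegree_eq_zero h0

lemma stmt3c_ne (P : ℕ → Polynomial ℂ) (hP : ∀ n, (P n).degree = (n : ℕ)) (n : ℕ) :
    stmt3c P n ≠ 0 := by
  have hnd : (P (n + 1)).natDegree = n + 1 := natDegree_eq_of_degree_eq_some (hP (n + 1))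
  have hne : P (n + 1) ≠ 0 := by
    intro h
    rw [h] at hnd
    simp at hnd
  have hlc : (P (n + 1)).coeff (n + 1) ≠ 0 := by
    have := Polynomial.leadingCoeff_ne_zero.mpr hne
    rwa [Polynomial.leadingCoeff, hnd] at this
  unfold stmt3c
  rw [Polynomial.coeff_iterate_derivative]
  simp only [zero_add, nsmul_eq_mul]
  refine mul_ne_zero ?_ hlc
  rw [Nat.descFactorial_self]
  exact Nat.cast_ne_zero.mpr (Nat.factorial_ne_zero (n + 1))

theorem stmt_3 (P : ℕ → Polynomial ℂ) (hP : ∀ n, (P n).degree = (n : ℕ))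
    (lam : ℕ → ℂ) (hlam0 : lam 0 = 0) (hlamne : ∀ n : ℕ, 1 ≤ n → lam n ≠ 0)
    (hsep : ∀ m n : ℕ, m ≠ n → lam m ≠ lam n) :
    ∃! M : ℕ → Polynomial ℂ,
      (∀ k : ℕ, (M k).degree ≤ (k + 1 : ℕ)) ∧
      (∀ n : ℕ, LOp1 M (P n) = lam n • P n) := by
  have hnd : ∀ n, (P n).natDegree = n := fun n => natDegree_eq_of_degree_eq_some (hP n)
  have hCeq := stmt3_deriv_eq_C P hP
  have hcne := stmt3c_ne P hP
  -- key expansion of `LOp1` for `P (n+1)`: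
  have hL : ∀ (M : ℕ → Polynomial ℂ) (n : ℕ),
      LOp1 M (P (n + 1)) =
        (∑ j ∈ Finset.range n, M j * Polynomial.derivative^[j + 1] (P (n + 1))) +
          M n * Polynomial.C (stmt3c P n) := by
    intro M n
    unfold LOp1
    rw [hnd (n + 1)]
    rw [Finset.sum_range_succ, Finset.sum_range_succ]
    have hz : Polynomial.derivative^[n + 1 + 1] (P (n + 1)) = 0 := by
      apply Polynomial.iterate_derivative_eq_zero
      rw [hnd]; omega
    rw [hz, hCeq n]
    ring
  refine ⟨stmt3M P lam, ⟨?_, ?_⟩, ?_⟩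
  · -- degree bound by strong induction
    intro k
    induction k using Nat.strong_induction_on with
    | _ n ih =>
      rw [stmt3M_eq]
      refine (Polynomial.degree_smul_le _ _).trans ?_
      refine (Polynomial.degree_sub_le _ _).trans ?_
      refine max_le ((Polynomial.degree_smul_le _ _).trans (le_of_eq (hP (n + 1)))) ?_
      refine (Polynomial.degree_sum_le _ _).trans ?_
      refine Finset.sup_le fun j hj => ?_
      have hj' : j < n := Finset.mem_range.mp hj
      refine (Polynomial.degree_mul_le _ _).trans ?_
      have h1 : (stmt3M P lam j).degree ≤ (j + 1 : ℕ) := ih j hj'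
      have h2 : (Polynomial.derivative^[j + 1] (P (n + 1))).degree ≤ ((n - j : ℕ) : WithBot ℕ) := by
        refine (Polynomial.degree_le_natDegree).trans (Nat.cast_le.mpr ?_)
        have := Polynomial.natDegree_iterate_derivative (P (n + 1)) (j + 1)
        rw [hnd] at this
        omega
      calc (stmt3M P lam j).degree + (Polynomial.derivative^[j + 1] (P (n + 1))).degree
          ≤ ((j + 1 : ℕ) : WithBot ℕ) + ((n - j : ℕ) : WithBot ℕ) := add_le_add h1 h2
        _ = (((j + 1) + (n - j) : ℕ) : WithBot ℕ) := by push_cast; ring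
        _ = ((n + 1 : ℕ) : WithBot ℕ) := by norm_cast; omega
  · -- eigenvalue equations
    intro n
    cases n with
    | zero =>
        unfold LOp1
        rw [hnd 0, hlam0, zero_smul]
        have h0 : Polynomial.derivative (P 0) = 0 := by
          apply Polynomial.derivative_of_natDegree_zero (hnd 0)
        simp [h0]
    | succ n =>
        rw [hL (stmt3M P lam) n]
        have key : stmt3M P lam n * Polynomial.C (stmt3c P n) =
            lam (n + 1) • P (n + 1) -
              ∑ j ∈ Finset.range n, stmt3M P lam j * Polynomial.derivative^[j + 1] (P (n + 1)) := by
          rw [stmt3M_eq, smul_mul_assoc, mul_comm _ (Polynomial.C (stmt3c P n)),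
            ← Polynomial.smul_eq_C_mul, smul_smul, inv_mul_cancel₀ (hcne n), one_smul]
        rw [key]
        ring
  · -- uniqueness
    rintro M' ⟨_, hM'⟩
    funext n
    induction n using Nat.strong_induction_on with
    | _ n ih =>
      have h1 := hL M' n
      have h2 := hL (stmt3M P lam) n
      rw [hM' (n + 1)] at h1
      have h3 : LOp1 (stmt3M P lam) (P (n + 1)) = lam (n + 1) • P (n + 1) := by
        rw [hL (stmt3M P lam) n]
        rw [stmt3M_eq, smul_mul_assoc, mul_comm _ (Polynomial.C (stmt3c P n)),
          ← Polynomial.smul_eq_C_mul, smul_smul, inv_mul_cancel₀ (hcne n), one_smul]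
        ring
      rw [h3] at h2
      have hsum : (∑ j ∈ Finset.range n, M' j * Polynomial.derivative^[j + 1] (P (n + 1))) =
          ∑ j ∈ Finset.range n, stmt3M P lam j * Polynomial.derivative^[j + 1] (P (n + 1)) := by
        refine Finset.sum_congr rfl fun j hj => ?_
        rw [ih j (Finset.mem_range.mp hj)]
      rw [hsum] at h1
      have := h1.symm.trans h2
      have hcancel : M' n * Polynomial.C (stmt3c P n) =
          stmt3M P lam n * Polynomial.C (stmt3c P n) := by
        exact add_left_cancel this
      exact mul_right_cancel₀ (by simpa using hcne n) hcancel
end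

section
/- Suppose η is a formal differential operator with η p_r = d_r p_r for r = 0,...,n−1, where p_r are polynomials of degree r, and write M_k = m_{kk} x^k + R_{k−1} with deg R_{k−1} ≤ k−1. Suppose Σ_{k=1}^n p(n,k) R_{k−1}(x) x^{n−k} = Σ_{j=0}^{n−1} α_j p_j(x), and d_n − d_0 = Σ_{k=1}^n p(n,k) m_{kk}. Then there exists a monic polynomial p_n of degree n with η p_n = d_n p_n if and only if there exist scalars β_0,...,β_{n−1} with (d_n − d_j) β_j = α_j for 0 ≤ j ≤ n−1. -/
open Polynomial Finset

/-- The formal differential operator `η(y) = ∑ₖ Mₖ · y⁽ᵏ⁾`. -/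
noncomputable def formalDiffOp (M : ℕ → Polynomial ℂ) (y : Polynomial ℂ) : Polynomial ℂ :=
  ∑ k ∈ Finset.range (y.natDegree + 1), M k * (Polynomial.derivative^[k] y)

/-- `R_{k-1}`, the part of `M_k` of degree `≤ k-1`: `M_k = m_{kk} x^k + R_{k-1}`. -/
noncomputable def lowPart (M : ℕ → Polynomial ℂ) (k : ℕ) : Polynomial ℂ :=
  M k - Polynomial.C ((M k).coeff k) * Polynomial.X ^ k

/-- The truncation of the operator to orders `≤ n`, as a linear map. -/
noncomputable def Lop (M : ℕ → Polynomial ℂ) (n : ℕ) : Polynomial ℂ →ₗ[ℂ] Polynomial ℂ :=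
  ∑ k ∈ Finset.range (n+1),
    (LinearMap.mulLeft ℂ (M k)).comp
      ((Polynomial.derivative : Polynomial ℂ →ₗ[ℂ] Polynomial ℂ) ^ k)

lemma Lop_apply (M : ℕ → Polynomial ℂ) (n : ℕ) (q : Polynomial ℂ) :
    Lop M n q = ∑ k ∈ Finset.range (n+1), M k * (Polynomial.derivative^[k] q) := by
  simp [Lop, LinearMap.sum_apply, LinearMap.mulLeft_apply, Module.End.pow_apply]

lemma span_aux (n : ℕ) (p : ℕ → Polynomial ℂ)
    (hpdeg : ∀ r < n, (p r).degree = (r : ℕ)) :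
    ∀ q : Polynomial ℂ, q.degree < (n : ℕ) →
      ∃ c : ℕ → ℂ, q = ∑ j ∈ Finset.range n, c j • p j := by
  have main : ∀ m : ℕ, ∀ q : Polynomial ℂ, q.natDegree < m → q.degree < (n : ℕ) →
      ∃ c : ℕ → ℂ, q = ∑ j ∈ Finset.range n, c j • p j := by
    intro m
    induction m with
    | zero => intro q hq; omega
    | succ m ih =>
      intro q hqm hqn
      by_cases h0 : q = 0
      · exact ⟨0, by simp [h0]⟩
      · set m' := q.natDegree with hm'
        have hdq : q.degree = (m' : ℕ) := degree_eq_natDegree h0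
        have hm'n : m' < n := by
          have := hqn; rw [hdq] at this; exact_mod_cast this
        have hpd := hpdeg m' hm'n
        have hpne : p m' ≠ 0 := fun h => by simp [h] at hpd
        have hplc : (p m').leadingCoeff ≠ 0 := leadingCoeff_ne_zero.mpr hpne
        set t := q.leadingCoeff / (p m').leadingCoeff with ht
        have htne : t ≠ 0 := div_ne_zero (leadingCoeff_ne_zero.mpr h0) hplc
        set r := q - C t * p m' with hr
        have hdeg2 : (C t * p m').degree = q.degree := by
          rw [degree_C_mul htne, hpd, hdq]
        have hlc2 : q.leadingCoeff = (C t * p m').leadingCoeff := by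
          rw [leadingCoeff_mul, leadingCoeff_C, ht, div_mul_cancel₀ _ hplc]
        have hrlt : r.degree < q.degree := degree_sub_lt hdeg2.symm h0 hlc2
        have hqr : q = r + C t * p m' := by rw [hr]; ring
        rcases eq_or_ne r 0 with h | h
        · refine ⟨fun j => if j = m' then t else 0, ?_⟩
          simp only [ite_smul, zero_smul, Finset.sum_ite_eq', Finset.mem_range,
            if_pos hm'n]
          rw [smul_eq_C_mul]
          rw [hqr, h, zero_add]
        · have hrm : r.natDegree < m := by
            have := natDegree_lt_natDegree h hrlt
            omega
          obtain ⟨c, hc⟩ := ih r hrm (hrlt.trans hqn)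
          refine ⟨fun j => c j + if j = m' then t else 0, ?_⟩
          simp only [add_smul, Finset.sum_add_distrib, ite_smul, zero_smul,
            Finset.sum_ite_eq', Finset.mem_range, if_pos hm'n]
          rw [← hc, smul_eq_C_mul]
          exact hqr
  exact fun q hq => main (q.natDegree + 1) q (Nat.lt_succ_self _) hq

lemma indep_aux (n : ℕ) (p : ℕ → Polynomial ℂ)
    (hpdeg : ∀ r < n, (p r).degree = (r : ℕ))
    (γ : ℕ → ℂ) (h : ∑ j ∈ Finset.range n, γ j • p j = 0) : ∀ j < n, γ j = 0 := by
  by_contra hc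
  push_neg at hc
  obtain ⟨j0, hj0n, hj0⟩ := hc
  set S := (Finset.range n).filter (fun j => γ j ≠ 0) with hS
  have hSne : S.Nonempty := ⟨j0, by simp [hS, Finset.mem_filter, hj0n, hj0]⟩
  set j := S.max' hSne with hj
  have hjmem := S.max'_mem hSne
  have hjn : j < n := Finset.mem_range.mp (Finset.mem_filter.mp hjmem).1
  have hγj : γ j ≠ 0 := (Finset.mem_filter.mp hjmem).2
  have hco := congrArg (fun q => Polynomial.coeff q j) h
  simp only [Polynomial.finset_sum_coeff, Polynomial.coeff_smul, Polynomial.coeff_zero,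
    smul_eq_mul] at hco
  have hterm : ∀ b ∈ Finset.range n, b ≠ j → γ b * (p b).coeff j = 0 := by
    intro b hb hbj
    rcases lt_or_gt_of_ne hbj with hlt | hgt
    · have hz : (p b).coeff j = 0 := coeff_eq_zero_of_degree_lt (by
        rw [hpdeg b (Finset.mem_range.mp hb)]; exact_mod_cast hlt)
      rw [hz, mul_zero]
    · have hz : γ b = 0 := by
        by_contra hbne
        have hmem : b ∈ S := Finset.mem_filter.mpr ⟨hb, hbne⟩
        have := S.le_max' b hmem
        omega
      rw [hz, zero_mul]
  rw [Finset.sum_eq_single j hterm (fun hb => absurd (Finset.mem_range.mpr hjn) hb)] at hco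
  exact hγj ((mul_eq_zero.mp hco).resolve_right (coeff_ne_zero_of_eq_degree (hpdeg j hjn)))

theorem stmt_4 (M : ℕ → Polynomial ℂ)
    (hdeg : ∀ k, (M k).degree ≤ (k : ℕ)) (hM0 : (M 0).degree ≤ 0)
    (n : ℕ) (hn : 1 ≤ n)
    (d : ℕ → ℂ) (p : ℕ → Polynomial ℂ)
    (hpdeg : ∀ r < n, (p r).degree = (r : ℕ))
    (heig : ∀ r < n, formalDiffOp M (p r) = d r • p r)
    (α : ℕ → ℂ)
    (hα : ∑ k ∈ Finset.Icc 1 n, (Nat.descFactorial n k : ℂ) •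
            (lowPart M k * Polynomial.X ^ (n - k)) =
          ∑ j ∈ Finset.range n, α j • p j)
    (hd : d n - d 0 = ∑ k ∈ Finset.Icc 1 n, (Nat.descFactorial n k : ℂ) * (M k).coeff k) :
    (∃ pn : Polynomial ℂ, pn.Monic ∧ pn.natDegree = n ∧ formalDiffOp M pn = d n • pn) ↔
    (∃ β : ℕ → ℂ, ∀ j < n, (d n - d j) * β j = α j) := by
  -- Step 1: M 0 = C (d 0)
  have hp0d : (p 0).degree = (0 : ℕ) := hpdeg 0 hn
  have hp0nat : (p 0).natDegree = 0 := natDegree_eq_of_degree_eq_some hp0d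
  have hp0ne : p 0 ≠ 0 := fun h => by simp [h] at hp0d
  have hM0' : M 0 = C (d 0) := by
    have h0 := heig 0 hn
    rw [formalDiffOp, hp0nat] at h0
    simp only [zero_add, Finset.sum_range_one, Function.iterate_zero, id_eq] at h0
    have hc0 : (p 0).coeff 0 ≠ 0 := coeff_ne_zero_of_eq_degree hp0d
    have hM0c : M 0 = C ((M 0).coeff 0) := eq_C_of_degree_le_zero hM0
    have hp0 : p 0 = C ((p 0).coeff 0) := eq_C_of_degree_le_zero (le_of_eq hp0d)
    rw [hM0c, hp0, ← C_mul, smul_eq_C_mul, ← C_mul, C_inj] at h0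
    rw [hM0c, C_inj]
    exact mul_right_cancel₀ hc0 h0
  -- Step 2: key computation of Lop on X^n
  have hsplit : Finset.range (n+1) = insert 0 (Finset.Icc 1 n) := by
    ext x; simp only [Finset.mem_range, Finset.mem_insert, Finset.mem_Icc]; omega
  have hLX : Lop M n (X ^ n : Polynomial ℂ) =
      d n • X ^ n + ∑ j ∈ Finset.range n, α j • p j := by
    rw [Lop_apply]
    simp only [Polynomial.iterate_derivative_X_pow_eq_smul]
    rw [hsplit, Finset.sum_insert (by simp)]
    have hterm : ∀ k ∈ Finset.Icc 1 n,
        M k * ((Nat.descFactorial n k : ℂ) • X ^ (n-k)) =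
        ((Nat.descFactorial n k : ℂ) * (M k).coeff k) • X ^ n
          + (Nat.descFactorial n k : ℂ) • (lowPart M k * X ^ (n-k)) := by
      intro k hk
      obtain ⟨hk1, hkn⟩ := Finset.mem_Icc.mp hk
      set m := (M k).coeff k with hm
      have hMk : M k = C m * X ^ k + lowPart M k := by
        rw [hm, lowPart]; ring
      rw [mul_smul_comm, hMk, add_mul, smul_add]
      congr 1
      rw [mul_assoc, ← pow_add, Nat.add_sub_cancel' hkn, ← smul_eq_C_mul, smul_smul]
    rw [Finset.sum_congr rfl hterm, Finset.sum_add_distrib, ← Finset.sum_smul, ← hd, hα]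
    rw [hM0', Nat.descFactorial_zero, Nat.cast_one, one_smul, Nat.sub_zero,
      ← smul_eq_C_mul, ← add_assoc, ← add_smul]
    congr 2
    ring
  -- Step 3: Lop agrees with formalDiffOp / eigenvalue property
  have hLp : ∀ r < n, Lop M n (p r) = d r • p r := by
    intro r hr
    have hnat : (p r).natDegree = r := natDegree_eq_of_degree_eq_some (hpdeg r hr)
    rw [Lop_apply, ← heig r hr, formalDiffOp, hnat]
    refine (Finset.sum_subset ?_ ?_).symm
    · intro x hx; simp only [Finset.mem_range] at *; omega
    · intro k hk hk2
      simp only [Finset.mem_range, not_lt] at hk2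
      rw [Polynomial.iterate_derivative_eq_zero (by omega : (p r).natDegree < k), mul_zero]
  have hLq : ∀ q : Polynomial ℂ, q.natDegree = n → formalDiffOp M q = Lop M n q := by
    intro q hq
    rw [Lop_apply, formalDiffOp, hq]
  -- Step 4: the fundamental combination identity
  have hcomb : ∀ c : ℕ → ℂ,
      Lop M n (X ^ n + ∑ j ∈ Finset.range n, c j • p j)
        - d n • (X ^ n + ∑ j ∈ Finset.range n, c j • p j)
      = ∑ j ∈ Finset.range n, (α j - (d n - d j) * c j) • p j := by
    intro c
    have hin : ∀ j ∈ Finset.range n, Lop M n (c j • p j) = (c j * d j) • p j := by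
      intro j hj
      rw [map_smul, hLp j (Finset.mem_range.mp hj), smul_smul]
    rw [map_add, map_sum, Finset.sum_congr rfl hin, hLX, smul_add, Finset.smul_sum]
    simp only [smul_smul]
    rw [add_assoc, add_sub_add_left_eq_sub, ← Finset.sum_add_distrib,
      ← Finset.sum_sub_distrib]
    refine Finset.sum_congr rfl fun j hj => ?_
    rw [← add_smul, ← sub_smul]
    congr 1
    ring
  constructor
  · rintro ⟨pn, hmon, hdn, hpe⟩
    have hpne : pn ≠ 0 := hmon.ne_zero
    have hdq : pn.degree = (n : ℕ) := by rw [degree_eq_natDegree hpne, hdn]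
    have hsub : (pn - X ^ n).degree < ((n : ℕ) : WithBot ℕ) := by
      have := degree_sub_lt (q := X ^ n) (by rw [hdq, degree_X_pow]) hpne
        (by rw [hmon.leadingCoeff, leadingCoeff_X_pow])
      rwa [hdq] at this
    obtain ⟨c, hc⟩ := span_aux n p hpdeg _ hsub
    have hpn : pn = X ^ n + ∑ j ∈ Finset.range n, c j • p j := by
      rw [← hc]; ring
    have hzero : ∑ j ∈ Finset.range n, (α j - (d n - d j) * c j) • p j = 0 := by
      rw [← hcomb c, ← hpn, ← hLq pn hdn, hpe, sub_self]
    have := indep_aux n p hpdeg _ hzero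
    exact ⟨c, fun j hj => by have h := this j hj; linear_combination -h⟩
  · rintro ⟨β, hβ⟩
    set S := ∑ j ∈ Finset.range n, β j • p j with hSdef
    have hSdeg : S.degree < ((X : Polynomial ℂ) ^ n).degree := by
      rw [degree_X_pow]
      refine lt_of_le_of_lt (degree_sum_le _ _) ?_
      rw [Finset.sup_lt_iff (by
        rw [← Polynomial.degree_X_pow (R := ℂ) n]
        exact bot_lt_iff_ne_bot.mpr (fun h => pow_ne_zero n X_ne_zero (degree_eq_bot.mp h))
        )]
      intro j hj
      refine lt_of_le_of_lt (degree_smul_le _ _) ?_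
      rw [hpdeg j (Finset.mem_range.mp hj)]
      exact_mod_cast Finset.mem_range.mp hj
    have hnat : (X ^ n + S).natDegree = n := by
      have hdg : (X ^ n + S).degree = ((n : ℕ) : WithBot ℕ) := by
        rw [degree_add_eq_left_of_degree_lt hSdeg, degree_X_pow]
      exact natDegree_eq_of_degree_eq_some hdg
    refine ⟨X ^ n + S, Monic.add_of_left (monic_X_pow n) hSdeg, hnat, ?_⟩
    rw [hLq _ hnat, ← sub_eq_zero, hSdef, hcomb β]
    refine Finset.sum_eq_zero fun j hj => ?_
    rw [hβ j (Finset.mem_range.mp hj), sub_self, zero_smul]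
end

section
/- Let m be a finite-order differential operator (i.e. M_k ≡ 0 for all k bigger than some r with M_r ≢ 0) satisfying m p_n = d_n p_n for a polynomial sequence (p_n), deg p_n = n, and nonzero scalars d_n. Let (d'_n) differ from (d_n) in at least one and at most finitely many indices. Then the unique formal differential operator η̃ with η̃ p_n = d'_n p_n for all n is of infinite order, i.e. for no r do its coefficient polynomials M̃_k vanish for all k > r. -/
open Polynomial Finset

theorem stmt_7 (p : ℕ → Polynomial ℂ) (hp : ∀ n, (p n).degree = (n : ℕ))
    -- the finite-order differential operator `m` with coefficients `M`
    (M : ℕ → Polynomial ℂ)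
    (hMdeg : ∀ k, (M k).degree ≤ (k : ℕ)) (hM0 : (M 0).degree ≤ 0)
    (r : ℕ) (hr : 1 ≤ r) (hMr : M r ≠ 0) (hfin : ∀ k, r < k → M k = 0)
    (d : ℕ → ℂ) (hd : ∀ n, d n ≠ 0)
    (heig : ∀ n, formalDiffOp M (p n) = d n • p n)
    -- the perturbed eigenvalue sequence `d'`
    (d' : ℕ → ℂ) (hd' : ∀ n, d' n ≠ 0) (hd'sep : ∀ m n : ℕ, m ≠ n → d' m ≠ d' n)
    (hpert : ∃ n, d n ≠ d' n) (hfinpert : {n : ℕ | d n ≠ d' n}.Finite) :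
    -- any formal differential operator `η̃` with `η̃ pₙ = d'ₙ pₙ` has infinite order
    ∀ M' : ℕ → Polynomial ℂ, (∀ k, (M' k).degree ≤ (k : ℕ)) → (M' 0).degree ≤ 0 →
      (∀ n, formalDiffOp M' (p n) = d' n • p n) →
      ¬ ∃ s : ℕ, ∀ k, s < k → M' k = 0 := by
  rintro M' hM'deg hM'0 heig' ⟨s, hs⟩
  classical
  set t := max r s with ht
  set N : ℕ → Polynomial ℂ := fun k => M k - M' k with hN
  have hNdeg : ∀ k, (N k).degree ≤ (k : ℕ) := fun k =>
    (degree_sub_le _ _).trans (max_le (hMdeg k) (hM'deg k))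
  have hNfin : ∀ k, t < k → N k = 0 := by
    intro k hk
    have h1 : M k = 0 := hfin k (lt_of_le_of_lt (le_max_left r s) hk)
    have h2 : M' k = 0 := hs k (lt_of_le_of_lt (le_max_right r s) hk)
    simp [hN, h1, h2]
  have hdeg : ∀ n, (p n).natDegree = n := fun n => natDegree_eq_of_degree_eq_some (hp n)
  have hpne : ∀ n, p n ≠ 0 := by
    intro n h
    have := hp n
    rw [h, degree_zero] at this
    exact (by simp at this)
  have hlead : ∀ n, (p n).coeff n ≠ 0 := by
    intro n
    have := coeff_ne_zero_of_eq_degree (hp n)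
    simpa using this
  -- the difference operator
  have hDe : ∀ n, ∑ k ∈ Finset.range (n + 1), N k * (derivative^[k] (p n))
      = (d n - d' n) • p n := by
    intro n
    have h1 := heig n
    have h2 := heig' n
    unfold formalDiffOp at h1 h2
    rw [hdeg n] at h1 h2
    have : ∑ k ∈ Finset.range (n + 1), N k * (derivative^[k] (p n))
        = (∑ k ∈ Finset.range (n + 1), M k * (derivative^[k] (p n)))
          - ∑ k ∈ Finset.range (n + 1), M' k * (derivative^[k] (p n)) := by
      rw [← Finset.sum_sub_distrib]
      exact Finset.sum_congr rfl fun k _ => by rw [hN]; ring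
    rw [this, h1, h2, sub_smul]
  -- coefficients of N k vanish above degree k
  have hhigh : ∀ k i, k < i → (N k).coeff i = 0 := by
    intro k i hki
    apply coeff_eq_zero_of_degree_lt
    exact lt_of_le_of_lt (hNdeg k) (by exact_mod_cast Nat.cast_lt.mpr hki)
  -- N is not identically zero
  have hNne : ∃ k, N k ≠ 0 := by
    obtain ⟨n0, hn0⟩ := hpert
    by_contra h
    push_neg at h
    have h0 := hDe n0
    rw [Finset.sum_eq_zero (fun k _ => by rw [h k, zero_mul])] at h0
    have := (smul_eq_zero.mp h0.symm).resolve_right (hpne n0)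
    exact hn0 (sub_eq_zero.mp this)
  -- the minimal shift s₀
  have hT : ∃ s0 : ℕ, ∃ k, s0 ≤ k ∧ (N k).coeff (k - s0) ≠ 0 := by
    obtain ⟨k, hk⟩ := hNne
    obtain ⟨i, hi⟩ : ∃ i, (N k).coeff i ≠ 0 := by
      by_contra h; push_neg at h; exact hk (Polynomial.ext fun i => h i)
    have hik : i ≤ k := by
      by_contra h; push_neg at h; exact hi (hhigh k i h)
    exact ⟨k - i, k, Nat.sub_le k i, by rwa [Nat.sub_sub_self hik]⟩
  set s0 := Nat.find hT with hs0
  obtain ⟨k1, hk1le, hk1⟩ := Nat.find_spec hT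
  have hmin : ∀ k i, i ≤ k → k - i < s0 → (N k).coeff i = 0 := by
    intro k i hik hlt
    by_contra h
    exact Nat.find_min hT hlt ⟨k, Nat.sub_le k i, by rwa [Nat.sub_sub_self hik]⟩
  have hNk0 : ∀ k, k < s0 → N k = 0 := by
    intro k hk
    apply Polynomial.ext
    intro i
    rcases le_or_gt i k with h | h
    · exact (hmin k i h (lt_of_le_of_lt (Nat.sub_le k i) hk)).trans (coeff_zero i).symm
    · exact (hhigh k i h).trans (coeff_zero i).symm
  have hk1t : k1 ≤ t := by
    by_contra h
    push_neg at h
    exact hk1 (by rw [hNfin k1 h]; simp)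
  have hs0t : s0 ≤ t := le_trans hk1le hk1t
  -- the symbol polynomial q
  set c : ℕ → ℂ := fun k => (N k).coeff (k - s0) with hc
  set q : Polynomial ℂ := ∑ k ∈ Finset.range (t + 1), C (c k) * descPochhammer ℂ k with hq
  have hqeval : ∀ n : ℕ, q.eval (n : ℂ) = ∑ k ∈ Finset.range (t + 1),
      c k * (n.descFactorial k : ℂ) := by
    intro n
    rw [hq, eval_finset_sum]
    exact Finset.sum_congr rfl fun k _ => by
      rw [eval_mul, eval_C, descPochhammer_eval_eq_descFactorial]
  -- q ≠ 0
  have hqne : q ≠ 0 := by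
    set km := Nat.findGreatest (fun k => c k ≠ 0) t with hkm
    have hkmspec : c km ≠ 0 := Nat.findGreatest_spec (P := fun k => c k ≠ 0) hk1t hk1
    have hkmle : km ≤ t := Nat.findGreatest_le t
    have hcoeff : q.coeff km = c km := by
      rw [hq, finset_sum_coeff]
      rw [Finset.sum_eq_single km]
      · rw [coeff_C_mul]
        have h1 : (descPochhammer ℂ km).natDegree = km := descPochhammer_natDegree ℂ km
        have h2 : (descPochhammer ℂ km).coeff km = 1 := by
          have := (monic_descPochhammer ℂ km).coeff_natDegree
          rwa [h1] at this
        rw [h2, mul_one]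
      · intro k hk hne
        rw [coeff_C_mul]
        rcases lt_or_gt_of_ne hne with h | h
        · have : (descPochhammer ℂ k).coeff km = 0 := by
            apply coeff_eq_zero_of_natDegree_lt
            rwa [descPochhammer_natDegree]
          rw [this, mul_zero]
        · have : c k = 0 := by
            by_contra hc0
            exact Nat.findGreatest_is_greatest (P := fun k => c k ≠ 0) h
              (Nat.lt_succ_iff.mp (Finset.mem_range.mp hk)) hc0
          rw [this, zero_mul]
      · intro h
        exact absurd (Finset.mem_range.mpr (Nat.lt_succ_of_le hkmle)) h
    intro h
    rw [h, coeff_zero] at hcoeff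
    exact hkmspec hcoeff.symm
  -- the bad set is finite; pick a good n
  have hroots : {n : ℕ | q.eval (n : ℂ) = 0}.Finite := by
    have : {x : ℂ | q.IsRoot x}.Finite := q.finite_setOf_isRoot hqne
    exact this.preimage (Set.injOn_of_injective Nat.cast_injective)
  have hbad : ({n : ℕ | d n ≠ d' n} ∪ {n : ℕ | q.eval (n : ℂ) = 0} ∪ Set.Iic t).Finite :=
    (hfinpert.union hroots).union (Set.finite_Iic t)
  obtain ⟨n, hn⟩ := hbad.infinite_compl.nonempty
  simp only [Set.mem_compl_iff, Set.mem_union, Set.mem_setOf_eq, Set.mem_Iic, not_or] at hn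
  obtain ⟨⟨hnd, hnq⟩, hnt⟩ := hn
  push_neg at hnd hnt
  -- n > t, d n = d' n, q.eval n ≠ 0
  have hns0 : s0 ≤ n := le_trans hs0t (le_of_lt hnt)
  -- key coefficient computation
  have key : ∀ k ∈ Finset.range (n + 1),
      (N k * derivative^[k] (p n)).coeff (n - s0)
        = c k * (n.descFactorial k : ℂ) * (p n).coeff n := by
    intro k hk
    have hkn : k ≤ n := Nat.lt_succ_iff.mp (Finset.mem_range.mp hk)
    rcases lt_or_ge k s0 with hks | hks
    · have h0 : N k = 0 := hNk0 k hks
      rw [h0, zero_mul, coeff_zero, hc]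
      simp [h0]
    · rw [coeff_mul]
      rw [Finset.sum_eq_single_of_mem ((k - s0, n - k))]
      · rw [coeff_iterate_derivative]
        have h1 : n - k + k = n := Nat.sub_add_cancel hkn
        rw [h1]
        simp only [nsmul_eq_mul, hc]
        push_cast
        ring
      · rw [Finset.HasAntidiagonal.mem_antidiagonal]
        omega
      · rintro ⟨i, j⟩ hmem hne
        rw [Finset.HasAntidiagonal.mem_antidiagonal] at hmem
        simp only at hmem ⊢
        rcases lt_or_ge k i with h | h
        · rw [hhigh k i h, zero_mul]
        · rcases lt_or_ge (k - i) s0 with h2 | h2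
          · rw [hmin k i h h2, zero_mul]
          · -- i ≤ k - s0; if equality then (i,j) would be the chosen pair
            have hilt : i < k - s0 := by
              rcases lt_or_eq_of_le (by omega : i ≤ k - s0) with h3 | h3
              · exact h3
              · exfalso; apply hne; rw [h3]; congr 1; omega
            have hjk : n < j + k := by omega
            rw [coeff_iterate_derivative]
            have : (p n).coeff (j + k) = 0 := by
              apply coeff_eq_zero_of_natDegree_lt
              rwa [hdeg n]
            rw [this, smul_zero, mul_zero]
  -- conclude
  have hzero : (∑ k ∈ Finset.range (n + 1), N k * derivative^[k] (p n)).coeff (n - s0) = 0 := by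
    rw [hDe n, hnd, sub_self, zero_smul, coeff_zero]
  rw [finset_sum_coeff, Finset.sum_congr rfl key, ← Finset.sum_mul] at hzero
  have hsum : ∑ k ∈ Finset.range (n + 1), c k * (n.descFactorial k : ℂ)
      = ∑ k ∈ Finset.range (t + 1), c k * (n.descFactorial k : ℂ) := by
    symm
    apply Finset.sum_subset (Finset.range_subset_range.mpr (by omega))
    intro k _ hk2
    have : t < k := by
      rw [Finset.mem_range, not_lt] at hk2
      omega
    rw [hc]
    simp [hNfin k this]
  rw [hsum, ← hqeval n] at hzero
  rcases mul_eq_zero.mp hzero with h | h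
  · exact hnq h
  · exact hlead n h
end

section
/- Let p = (p_n) be an orthogonal polynomial sequence with three-term recurrence x p_n = a_n p_{n+1} + b_n p_n + c_n p_{n−1}, let d = (d_n) be a nonconstant real sequence with d_0 = 1 and all d_n ≠ 0, and let S_{p,d} be the linear operator on polynomials with S_{p,d}(p_n) = d_n p_n. Let τ_{a,b} (a ≠ 0) be the shift operator τ_{a,b}(x^n) = (ax+b)^n. Then S_{p,d} = τ_{a,b} if and only if d_n = (−1)^n for all n, a = −1, b is arbitrary, and q_n(x) = p_n(x + b/2) defines a symmetric orthogonal polynomial sequence. -/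
open Polynomial

/-- `(p n)` is an orthogonal polynomial sequence with respect to a positive definite moment
functional: `p 0 = 1`, `deg pₙ = n`, and there is a linear functional `L` with
`L(pₘ pₙ) = 0` for `m ≠ n` and `L(pₙ²) > 0`. -/
def IsOPS (p : ℕ → Polynomial ℝ) : Prop :=
  p 0 = 1 ∧ (∀ n, (p n).degree = (n : ℕ)) ∧
  ∃ L : Polynomial ℝ →ₗ[ℝ] ℝ,
    (∀ m n, m ≠ n → L (p m * p n) = 0) ∧ (∀ n, 0 < L (p n * p n))

/-- A polynomial sequence is symmetric if `qₙ(−x) = (−1)ⁿ qₙ(x)`. -/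
def IsSymmetricPS (q : ℕ → Polynomial ℝ) : Prop :=
  ∀ n, (q n).comp (-Polynomial.X) = (-1 : ℝ) ^ n • q n

/-- The shift operator `τ_{a,b}`, sending `xⁿ` to `(ax+b)ⁿ`, i.e. `y ↦ y(ax+b)`. -/
noncomputable def shiftOp (a b : ℝ) (y : Polynomial ℝ) : Polynomial ℝ :=
  y.comp (Polynomial.C a * Polynomial.X + Polynomial.C b)

namespace Stmt9Aux

/-- Composition with a fixed polynomial, as a linear map. -/
noncomputable def compL (r : Polynomial ℝ) : Polynomial ℝ →ₗ[ℝ] Polynomial ℝ where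
  toFun y := y.comp r
  map_add' x y := add_comp
  map_smul' c y := by simp [smul_comp]

@[simp] lemma compL_apply (r y : Polynomial ℝ) : compL r y = y.comp r := rfl

lemma coeff_comp_C_mul_X (q : Polynomial ℝ) (a : ℝ) (j : ℕ) :
    (q.comp (C a * X)).coeff j = a ^ j * q.coeff j := by
  induction q using Polynomial.induction_on' with
  | add u v hu hv => simp [add_comp, hu, hv, mul_add]
  | monomial n c =>
      rw [monomial_comp, mul_pow, ← C_pow]
      rw [show C c * (C (a ^ n) * X ^ n) = C (c * a ^ n) * X ^ n by rw [C_mul]; ring]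
      simp only [coeff_C_mul, coeff_X_pow, coeff_monomial]
      by_cases h : n = j
      · subst h; simp [mul_comm]
      · simp [h, Ne.symm h]

lemma mem_span (p : ℕ → Polynomial ℝ) (hdeg : ∀ n, (p n).degree = (n : ℕ)) (y : Polynomial ℝ) :
    y ∈ Submodule.span ℝ (Set.range p) := by
  have hpne : ∀ n, p n ≠ 0 := by
    intro n h
    have := hdeg n
    rw [h, degree_zero] at this
    exact absurd this (by simp)
  have hnat : ∀ n, (p n).natDegree = n := fun n => natDegree_eq_of_degree_eq_some (hdeg n)
  have hlc : ∀ n, (p n).leadingCoeff ≠ 0 := fun n => leadingCoeff_ne_zero.mpr (hpne n)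
  suffices H : ∀ N (y : Polynomial ℝ), y.natDegree ≤ N →
      y ∈ Submodule.span ℝ (Set.range p) from H _ y le_rfl
  intro N
  induction N with
  | zero =>
      intro y hy
      have hy0 : y = C (y.coeff 0) := eq_C_of_natDegree_le_zero hy
      have hp0 : p 0 = C ((p 0).coeff 0) := eq_C_of_natDegree_le_zero (le_of_eq (hnat 0))
      have hk : (p 0).coeff 0 ≠ 0 := by
        intro h
        apply hpne 0
        rw [hp0, h, C_0]
      have h2 : (y.coeff 0 / (p 0).coeff 0) • p 0 = C (y.coeff 0) := by
        rw [hp0, smul_C, coeff_C_zero, smul_eq_mul, div_mul_cancel₀ _ hk]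
      rw [hy0, ← h2]
      exact Submodule.smul_mem _ _ (Submodule.subset_span ⟨0, rfl⟩)
  | succ N ih =>
      intro y hy
      by_cases h0 : y = 0
      · simp [h0]
      by_cases hle : y.natDegree ≤ N
      · exact ih y hle
      have hyd : y.natDegree = N + 1 := le_antisymm hy (Nat.succ_le_of_lt (lt_of_not_ge hle))
      set n := N + 1 with hn
      set c : ℝ := y.leadingCoeff / (p n).leadingCoeff with hc
      have hc0 : c ≠ 0 := div_ne_zero (leadingCoeff_ne_zero.mpr h0) (hlc n)
      have hsm : c • p n = C c * p n := smul_eq_C_mul c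
      have hlc' : y.leadingCoeff = (c • p n).leadingCoeff := by
        rw [hsm, leadingCoeff_mul, leadingCoeff_C, hc, div_mul_cancel₀ _ (hlc n)]
      have hdegc : y.degree = (c • p n).degree := by
        rw [hsm, degree_mul, degree_C hc0, zero_add, hdeg n, degree_eq_natDegree h0, hyd]
      have hsub : (y - c • p n).degree < y.degree := degree_sub_lt hdegc h0 hlc'
      have hmem : (y - c • p n) ∈ Submodule.span ℝ (Set.range p) := by
        apply ih
        by_cases hz : y - c • p n = 0
        · simp [hz]
        · have hlt := natDegree_lt_natDegree hz hsub
          rw [hyd] at hlt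
          exact Nat.lt_succ_iff.mp hlt
      have hy' : y = (y - c • p n) + c • p n := by ring
      rw [hy']
      exact Submodule.add_mem _ hmem
        (Submodule.smul_mem _ _ (Submodule.subset_span ⟨n, rfl⟩))

lemma comp_back (t : ℝ) (y : Polynomial ℝ) : (y.comp (X + C t)).comp (X - C t) = y := by
  rw [comp_assoc]
  have : (X + C t).comp (X - C t) = X := by
    simp [add_comp]
  rw [this, comp_X]

lemma isOPS_comp {p : ℕ → Polynomial ℝ} (hp : IsOPS p) (t : ℝ) :
    IsOPS (fun n => (p n).comp (X + C t)) := by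
  obtain ⟨h1, hdeg, L, hL0, hLpos⟩ := hp
  have hpne : ∀ n, p n ≠ 0 := by
    intro n h
    have := hdeg n
    rw [h, degree_zero] at this
    exact absurd this (by simp)
  have hnat : ∀ n, (p n).natDegree = n := fun n => natDegree_eq_of_degree_eq_some (hdeg n)
  have hqne : ∀ n, (p n).comp (X + C t) ≠ 0 := by
    intro n h
    apply hpne n
    have := comp_back t (p n)
    rw [h, zero_comp] at this
    exact this.symm
  refine ⟨by simp [h1], ?_, L.comp (compL (X - C t)), ?_, ?_⟩
  · intro n
    rw [degree_eq_natDegree (hqne n), natDegree_comp, natDegree_X_add_C, mul_one, hnat n]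
  · intro m n hmn
    have : ((p m).comp (X + C t) * (p n).comp (X + C t)).comp (X - C t) = p m * p n := by
      simp only [mul_comp, comp_back]
    simp only [LinearMap.comp_apply, compL_apply, this]
    exact hL0 m n hmn
  · intro n
    have : ((p n).comp (X + C t) * (p n).comp (X + C t)).comp (X - C t) = p n * p n := by
      simp only [mul_comp, comp_back]
    simp only [LinearMap.comp_apply, compL_apply, this]
    exact hLpos n

end Stmt9Aux

open Stmt9Aux

theorem stmt_9 (p : ℕ → Polynomial ℝ) (hp : IsOPS p)
    (d : ℕ → ℝ) (hd0 : d 0 = 1) (hdne : ∀ n, d n ≠ 0) (hdnc : ∃ m n, d m ≠ d n)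
    (S : Polynomial ℝ →ₗ[ℝ] Polynomial ℝ) (hS : ∀ n, S (p n) = d n • p n)
    (a b : ℝ) (ha : a ≠ 0) :
    (∀ y : Polynomial ℝ, S y = shiftOp a b y) ↔
      ((∀ n, d n = (-1 : ℝ) ^ n) ∧ a = -1 ∧
        IsOPS (fun n => (p n).comp (Polynomial.X + Polynomial.C (b / 2))) ∧
        IsSymmetricPS (fun n => (p n).comp (Polynomial.X + Polynomial.C (b / 2)))) := by
  obtain ⟨hp1, hdeg, L, hL0, hLpos⟩ := hp
  have hpne : ∀ n, p n ≠ 0 := by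
    intro n h
    have := hdeg n
    rw [h, degree_zero] at this
    exact absurd this (by simp)
  have hnat : ∀ n, (p n).natDegree = n := fun n => natDegree_eq_of_degree_eq_some (hdeg n)
  have hcoeffne : ∀ n, (p n).coeff n ≠ 0 := by
    intro n
    have := coeff_ne_zero_of_eq_degree (hdeg n)
    exact this
  constructor
  · -- forward direction
    intro hτ
    have hmain : ∀ n, d n • p n = (p n).comp (C a * X + C b) := by
      intro n
      rw [← hS n, hτ (p n)]
      rfl
    -- d n = a ^ n
    have hdn : ∀ n, d n = a ^ n := by
      intro n
      have h := congrArg (fun q => q.coeff n) (hmain n)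
      simp only [coeff_smul, smul_eq_mul] at h
      have hndc : ((p n).comp (C a * X + C b)).natDegree = n := by
        rw [natDegree_comp, natDegree_linear ha, mul_one, hnat n]
      have hrhs : ((p n).comp (C a * X + C b)).coeff n = (p n).coeff n * a ^ n := by
        have := leadingCoeff_comp (p := p n) (q := C a * X + C b)
          (by rw [natDegree_linear ha]; exact one_ne_zero)
        rw [leadingCoeff, leadingCoeff, leadingCoeff_linear ha, hnat n, hndc] at this
        exact this
      rw [hrhs, mul_comm ((p n).coeff n)] at h
      exact mul_right_cancel₀ (hcoeffne n) h
    have ha1 : a ≠ 1 := by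
      intro h
      obtain ⟨m, n, hmn⟩ := hdnc
      apply hmn
      rw [hdn m, hdn n, h, one_pow, one_pow]
    -- the scaling relation for q n = p n ∘ (X + x₀)
    have key : ∀ (x₀ : ℝ), a * x₀ + b = x₀ →
        ∀ n, (((p n).comp (X + C x₀)).comp (C a * X)) = a ^ n • (p n).comp (X + C x₀) := by
      intro x₀ hfix n
      rw [comp_assoc]
      have hinner : (X + C x₀).comp (C a * X) = C a * X + C x₀ := by
        simp [add_comp]
      rw [hinner]
      have : a ^ n • (p n).comp (X + C x₀) = (a ^ n • p n).comp (X + C x₀) := by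
        rw [smul_comp]
      rw [this, ← hdn n, hmain n, comp_assoc]
      congr 1
      rw [add_comp, mul_comp, C_comp, X_comp, C_comp]
      rw [mul_add, ← C_mul, add_assoc, ← C_add, hfix]
    have hfix0 : (1 : ℝ) - a ≠ 0 := sub_ne_zero.mpr (Ne.symm ha1)
    set x₀ : ℝ := b / (1 - a) with hx₀
    have hfix : a * x₀ + b = x₀ := by
      rw [hx₀]; field_simp; ring
    have hq := key x₀ hfix
    set q : ℕ → Polynomial ℝ := fun n => (p n).comp (X + C x₀) with hqdef
    have hqne : ∀ n, q n ≠ 0 := by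
      intro n h
      apply hpne n
      have h' : (p n).comp (X + C x₀) = 0 := h
      have := comp_back x₀ (p n)
      rw [h', zero_comp] at this
      exact this.symm
    have hqnat : ∀ n, (q n).natDegree = n := by
      intro n
      show ((p n).comp (X + C x₀)).natDegree = n
      rw [natDegree_comp, natDegree_X_add_C, mul_one, hnat n]
    have hrel : ∀ n j, a ^ j * (q n).coeff j = a ^ n * (q n).coeff j := by
      intro n j
      have h := congrArg (fun y => y.coeff j) (hq n)
      simp only [coeff_smul, smul_eq_mul] at h
      rw [coeff_comp_C_mul_X] at h
      exact h
    -- a = -1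
    have ha2 : a = -1 := by
      by_contra hne
      have hne1 : (1 : ℝ) + a ≠ 0 := fun h => hne (by linarith)
      have hsq : (1 : ℝ) - a ^ 2 ≠ 0 := by
        intro h
        have h' : (1 - a) * (1 + a) = 0 := by linear_combination h
        rcases mul_eq_zero.mp h' with h' | h'
        · exact hfix0 h'
        · exact hne1 h'
      have hc10 : (q 1).coeff 0 = 0 := by
        have h := hrel 1 0
        have h0 : (q 1).coeff 0 * (1 - a) = 0 := by linear_combination h
        exact (mul_eq_zero.mp h0).resolve_right hfix0
      have hc20 : (q 2).coeff 0 = 0 := by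
        have h := hrel 2 0
        have h0 : (q 2).coeff 0 * (1 - a ^ 2) = 0 := by linear_combination h
        exact (mul_eq_zero.mp h0).resolve_right hsq
      have hc21 : (q 2).coeff 1 = 0 := by
        have h := hrel 2 1
        have h0 : (q 2).coeff 1 * (a * (1 - a)) = 0 := by linear_combination h
        exact (mul_eq_zero.mp h0).resolve_right (mul_ne_zero ha hfix0)
      -- q 2 = c₂ X², q 1 = c₁ X
      set c2 := (q 2).coeff 2 with hc2def
      set c1 := (q 1).coeff 1 with hc1def
      have hq2 : q 2 = C c2 * X ^ 2 := by
        ext j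
        rcases j with _ | _ | _ | j
        · simp [hc20, coeff_C_mul, coeff_X_pow]
        · simp [hc21, coeff_C_mul, coeff_X_pow]
        · simp [coeff_C_mul, coeff_X_pow, hc2def]
        · rw [coeff_eq_zero_of_natDegree_lt (by rw [hqnat 2]; omega)]
          simp [coeff_C_mul, coeff_X_pow]
      have hq1 : q 1 = C c1 * X := by
        ext j
        rcases j with _ | _ | j
        · simp [hc10, coeff_C_mul]
        · simp [coeff_C_mul, hc1def]
        · rw [coeff_eq_zero_of_natDegree_lt (by rw [hqnat 1]; omega)]
          simp [coeff_C_mul]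
      have hc2ne : c2 ≠ 0 := by
        intro h
        apply hqne 2
        apply leadingCoeff_eq_zero.mp
        rw [leadingCoeff, hqnat 2]
        exact h
      have hc1ne : c1 ≠ 0 := by
        intro h
        apply hqne 1
        apply leadingCoeff_eq_zero.mp
        rw [leadingCoeff, hqnat 1]
        exact h
      -- orthogonality contradiction
      set r : Polynomial ℝ := X - C x₀ with hrdef
      have hback : ∀ n, (q n).comp r = p n := fun n => comp_back x₀ (p n)
      have hq0 : q 0 = 1 := by rw [hqdef]; simp [hp1]
      have hLr2 : L (r ^ 2) = 0 := by
        have h02 := hL0 0 2 (by norm_num)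
        have : p 0 * p 2 = (C c2 * r ^ 2) := by
          rw [← hback 2, hq2, mul_comp, C_comp, pow_comp, X_comp, hp1, one_mul]
        rw [this] at h02
        have : C c2 * r ^ 2 = c2 • r ^ 2 := (smul_eq_C_mul c2).symm
        rw [this, map_smul, smul_eq_mul] at h02
        exact (mul_eq_zero.mp h02).resolve_left hc2ne
      have hqq : p 1 * p 1 = C (c1 * c1) * r ^ 2 := by
        rw [← hback 1, hq1, mul_comp, C_comp, X_comp, C_mul]
        ring
      have hpos := hLpos 1
      rw [hqq] at hpos
      have : C (c1 * c1) * r ^ 2 = (c1 * c1) • r ^ 2 := (smul_eq_C_mul _).symm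
      rw [this, map_smul, smul_eq_mul, hLr2, mul_zero] at hpos
      exact lt_irrefl 0 hpos
    -- now conclude
    have hx₀b : x₀ = b / 2 := by rw [hx₀, ha2]; norm_num
    refine ⟨fun n => by rw [hdn n, ha2], ha2, isOPS_comp ⟨hp1, hdeg, L, hL0, hLpos⟩ (b / 2), ?_⟩
    intro n
    have h := hq n
    rw [ha2, hx₀b] at h
    have : C (-1 : ℝ) * X = -X := by simp
    rw [this] at h
    exact h
  · -- reverse direction
    rintro ⟨hd, ha2, _, hsym⟩
    subst ha2
    intro y
    have hmem := mem_span p hdeg y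
    have hgen : ∀ n, S (p n) = shiftOp (-1) b (p n) := by
      intro n
      rw [hS n, hd n]
      have h := hsym n
      simp only [] at h
      -- compose both sides with X - C (b/2)
      have h2 := congrArg (fun z => z.comp (X - C (b / 2))) h
      rw [smul_comp, comp_back, comp_assoc, comp_assoc] at h2
      have hinner : (X + C (b / 2)).comp ((-X).comp (X - C (b / 2))) = C (-1 : ℝ) * X + C b := by
        have hb : C b = C (b / 2) + C (b / 2) := by rw [← C_add]; norm_num
        have hm : C (-1 : ℝ) = -1 := by simp
        rw [neg_comp, X_comp, add_comp, X_comp, C_comp, hb, hm]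
        ring
      rw [hinner] at h2
      show (-1 : ℝ) ^ n • p n = (p n).comp (C (-1) * X + C b)
      exact h2.symm
    -- extend by linearity over the span
    refine Submodule.span_induction ?_ ?_ ?_ ?_ hmem
    · rintro z ⟨n, rfl⟩
      exact hgen n
    · simp [shiftOp]
    · intro u v _ _ hu hv
      rw [map_add, hu, hv, shiftOp, shiftOp, shiftOp, add_comp]
    · intro c u _ hu
      rw [map_smul, hu, shiftOp, shiftOp, smul_comp]
end

section
/- If S_{p,d} = τ_{a,b} for an orthogonal polynomial sequence p, then the recurrence coefficients b_n of p all equal b/2, a = −1, and d_n = (−1)^n for all n ∈ ℕ₀. -/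
open Polynomial

lemma extract_aux (p : ℕ → Polynomial ℝ) (hdeg : ∀ n, (p n).degree = (n : ℕ))
    (n : ℕ) (α β : ℝ) (T : Polynomial ℝ) (hT : T.degree < (n : ℕ))
    (h : α • p (n + 1) + β • p n + T = 0) : α = 0 ∧ β = 0 ∧ T = 0 := by
  have hlc : ∀ m, (p m).coeff m ≠ 0 := fun m => coeff_ne_zero_of_eq_degree (hdeg m)
  have hlow : ∀ m k : ℕ, m < k → (p m).coeff k = 0 := by
    intro m k hmk
    exact coeff_eq_zero_of_degree_lt (by rw [hdeg m]; exact_mod_cast hmk)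
  have hTc : ∀ k : ℕ, (n : ℕ) ≤ k → T.coeff k = 0 := by
    intro k hk
    exact coeff_eq_zero_of_degree_lt (lt_of_lt_of_le hT (by exact_mod_cast hk))
  have hα : α = 0 := by
    have := congrArg (fun q => Polynomial.coeff q (n + 1)) h
    simp only [coeff_add, coeff_smul, smul_eq_mul, coeff_zero,
      hlow n (n + 1) (Nat.lt_succ_self n), hTc (n + 1) (Nat.le_succ n)] at this
    have h2 : α * (p (n + 1)).coeff (n + 1) = 0 := by linarith
    exact (mul_eq_zero.mp h2).resolve_right (hlc (n + 1))
  subst hα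
  have hβ : β = 0 := by
    have := congrArg (fun q => Polynomial.coeff q n) h
    simp only [coeff_add, coeff_smul, smul_eq_mul, coeff_zero, zero_mul,
      hTc n le_rfl] at this
    have h2 : β * (p n).coeff n = 0 := by linarith
    exact (mul_eq_zero.mp h2).resolve_right (hlc n)
  subst hβ
  refine ⟨rfl, rfl, ?_⟩
  simpa using h

theorem stmt_10 (p : ℕ → Polynomial ℝ) (hp : IsOPS p)
    -- the three-term recurrence `x pₙ = Aₙ p_{n+1} + Bₙ pₙ + Cₙ p_{n-1}` (with `p_{-1} = 0`)
    (A B C3 : ℕ → ℝ)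
    (hrec : ∀ n, Polynomial.X * p n =
      A n • p (n + 1) + B n • p n + (if n = 0 then 0 else C3 n • p (n - 1)))
    (d : ℕ → ℝ) (hd0 : d 0 = 1) (hdne : ∀ n, d n ≠ 0) (hdnc : ∃ m n, d m ≠ d n)
    (S : Polynomial ℝ →ₗ[ℝ] Polynomial ℝ) (hS : ∀ n, S (p n) = d n • p n)
    (a b : ℝ) (ha : a ≠ 0)
    (hSτ : ∀ y : Polynomial ℝ, S y = shiftOp a b y) :
    (∀ n, B n = b / 2) ∧ a = -1 ∧ (∀ n, d n = (-1 : ℝ) ^ n) := by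
  obtain ⟨hp0, hdeg, L, hLorth, hLpos⟩ := hp
  have hlc : ∀ m, (p m).coeff m ≠ 0 := fun m => coeff_ne_zero_of_eq_degree (hdeg m)
  have hlow : ∀ m k : ℕ, m < k → (p m).coeff k = 0 := by
    intro m k hmk
    exact coeff_eq_zero_of_degree_lt (by rw [hdeg m]; exact_mod_cast hmk)
  have hpne : ∀ m, p m ≠ 0 := fun m hm => hlc m (by simp [hm])
  -- A n ≠ 0
  have hA : ∀ n, A n ≠ 0 := by
    intro n hAn
    have := congrArg (fun q => Polynomial.coeff q (n + 1)) (hrec n)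
    have hif : (if n = 0 then (0 : Polynomial ℝ) else C3 n • p (n - 1)).coeff (n + 1) = 0 := by
      rcases eq_or_ne n 0 with h0 | h0
      · simp [h0]
      · have hn1 : n - 1 < n + 1 := by omega
        simp [h0, coeff_smul, hlow (n - 1) (n + 1) hn1]
    simp only [coeff_X_mul, coeff_add, coeff_smul, smul_eq_mul, hif, hAn, zero_mul,
      hlow n (n + 1) (Nat.lt_succ_self n)] at this
    exact hlc n (by linarith)
  -- the key equation
  have key : ∀ n, (A n * d (n + 1)) • p (n + 1) + (B n * d n) • p n
      + (if n = 0 then 0 else (C3 n * d (n - 1)) • p (n - 1))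
      = (d n * (a * A n)) • p (n + 1) + (d n * (a * B n + b)) • p n
      + (if n = 0 then 0 else (d n * (a * C3 n)) • p (n - 1)) := by
    intro n
    have h1 : S (Polynomial.X * p n) = (A n * d (n + 1)) • p (n + 1) + (B n * d n) • p n
        + (if n = 0 then 0 else (C3 n * d (n - 1)) • p (n - 1)) := by
      rw [hrec n, map_add, map_add, map_smul, map_smul, hS, hS, smul_smul, smul_smul]
      congr 1
      rcases eq_or_ne n 0 with h0 | h0
      · simp [h0]
      · simp [h0, map_smul, hS, smul_smul]
    have hcomp : (p n).comp (C a * X + C b) = d n • p n := by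
      rw [← shiftOp, ← hSτ, hS]
    have h2 : S (Polynomial.X * p n) = d n • ((C a * X + C b) * p n) := by
      rw [hSτ, shiftOp, mul_comp, X_comp, hcomp, mul_smul_comm]
    rw [h2] at h1
    rw [← h1]
    have hx : (C a * X + C b) * p n = a • (X * p n) + b • p n := by
      rw [add_mul, mul_assoc, smul_eq_C_mul, smul_eq_C_mul]
    rw [hx, hrec n]
    rcases eq_or_ne n 0 with h0 | h0
    · simp only [h0, if_true, reduceIte]
      module
    · simp only [h0, if_false]
      module
  -- scalar equations
  have eqs : ∀ n, A n * d (n + 1) = d n * (a * A n) ∧ B n * d n = d n * (a * B n + b)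
      ∧ (n ≠ 0 → C3 n * d (n - 1) = d n * (a * C3 n)) := by
    intro n
    have hk := key n
    rcases n with _ | m
    · norm_num at hk
      have hz : (A 0 * d 1 - d 0 * (a * A 0)) • p 1
          + (B 0 * d 0 - d 0 * (a * B 0 + b)) • p 0 + (0 : Polynomial ℝ) = 0 := by
        linear_combination (norm := module) hk
      obtain ⟨hα, hβ, -⟩ := extract_aux p hdeg 0 _ _ _ (by simp) hz
      exact ⟨by linarith, by linarith, fun h => absurd rfl h⟩
    · simp only [if_neg (Nat.succ_ne_zero m), Nat.add_sub_cancel] at hk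
      have hz : (A (m + 1) * d (m + 2) - d (m + 1) * (a * A (m + 1))) • p (m + 2)
          + (B (m + 1) * d (m + 1) - d (m + 1) * (a * B (m + 1) + b)) • p (m + 1)
          + (C3 (m + 1) * d m - d (m + 1) * (a * C3 (m + 1))) • p m = 0 := by
        linear_combination (norm := module) hk
      have hTd : ((C3 (m + 1) * d m - d (m + 1) * (a * C3 (m + 1))) • p m).degree
          < ((m + 1 : ℕ) : WithBot ℕ) := by
        refine lt_of_le_of_lt (degree_smul_le _ _) ?_
        rw [hdeg m]
        exact_mod_cast Nat.lt_succ_self m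
      obtain ⟨hα, hβ, hT⟩ := extract_aux p hdeg (m + 1) _ _ _ hTd hz
      have hγ : C3 (m + 1) * d m - d (m + 1) * (a * C3 (m + 1)) = 0 :=
        (smul_eq_zero.mp hT).resolve_right (hpne m)
      exact ⟨by linarith, by linarith, fun _ => by simpa using (by linarith : C3 (m + 1) * d m
        = d (m + 1) * (a * C3 (m + 1)))⟩
  -- d recurrence
  have e1 : ∀ n, d (n + 1) = a * d n := by
    intro n
    have h := (eqs n).1
    have h3 : A n * (d (n + 1) - a * d n) = 0 := by ring_nf; ring_nf at h; linarith
    have := (mul_eq_zero.mp h3).resolve_left (hA n)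
    linarith
  have hdpow : ∀ n, d n = a ^ n := by
    intro n
    induction n with
    | zero => simpa using hd0
    | succ m ih => rw [e1 m, ih, pow_succ]; ring
  -- C3 1 ≠ 0
  have hC1 : C3 1 ≠ 0 := by
    have hm1 : Polynomial.X * p 1 * p 0
        = A 1 • (p 2 * p 0) + B 1 • (p 1 * p 0) + C3 1 • (p 0 * p 0) := by
      have := congrArg (· * p 0) (hrec 1)
      simp only [if_neg (one_ne_zero)] at this
      simpa [add_mul, smul_mul_assoc] using this
    have hm0 : Polynomial.X * p 1 * p 0 = A 0 • (p 1 * p 1) + B 0 • (p 0 * p 1) := by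
      have := congrArg (· * p 1) (hrec 0)
      simp only [if_pos rfl] at this
      calc Polynomial.X * p 1 * p 0 = (Polynomial.X * p 0) * p 1 := by ring
        _ = A 0 • (p 1 * p 1) + B 0 • (p 0 * p 1) := by
            simpa [add_mul, smul_mul_assoc] using this
    have hL1 : L (Polynomial.X * p 1 * p 0) = C3 1 * L (p 0 * p 0) := by
      rw [hm1, map_add, map_add, map_smul, map_smul, map_smul,
        hLorth 2 0 (by norm_num), hLorth 1 0 (by norm_num)]
      simp
    have hL0 : L (Polynomial.X * p 1 * p 0) = A 0 * L (p 1 * p 1) := by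
      rw [hm0, map_add, map_smul, map_smul, hLorth 0 1 (by norm_num)]
      simp
    intro hc
    rw [hL0, hc, zero_mul] at hL1
    exact (mul_ne_zero (hA 0) (ne_of_gt (hLpos 1))) hL1
  -- a² = 1
  have ha2 : a * a = 1 := by
    have h := ((eqs 1).2.2 one_ne_zero)
    simp only [Nat.sub_self] at h
    -- C3 1 * d 0 = d 1 * (a * C3 1)
    have h3 : C3 1 * (d 0 - a * d 1) = 0 := by ring_nf; ring_nf at h; linarith
    have h4 : d 0 = a * d 1 := by
      have := (mul_eq_zero.mp h3).resolve_left hC1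
      linarith
    rw [hd0, hdpow 1, pow_one] at h4
    linarith
  have haneg : a = -1 := by
    rcases mul_self_eq_one_iff.mp ha2 with h1 | h1
    · exfalso
      obtain ⟨m, k, hmk⟩ := hdnc
      exact hmk (by rw [hdpow m, hdpow k, h1, one_pow, one_pow])
    · exact h1
  refine ⟨?_, haneg, fun n => by rw [hdpow n, haneg]⟩
  intro n
  have h := (eqs n).2.1
  have hcancel : d n * (B n - (a * B n + b)) = 0 := by ring_nf; ring_nf at h; linarith
  have := (mul_eq_zero.mp hcancel).resolve_left (hdne n)
  rw [haneg] at this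
  linarith
end

section
/- Let (Q_k) be an orthonormal basis of a Hilbert space H, (d_k) a nonconstant sequence of nonzero complex scalars, and T the linear operator with domain span{Q_k} defined by T(Q_k) = d_k Q_k + Σ_{t=0}^{k−1} (d_t − d_{t+1}) Q_t. Then for each fixed j ∈ ℕ₀, Q_j ∈ D(T*) if and only if d_j = d_{j+1}. Consequently T is unbounded for every nonconstant d. -/
open scoped InnerProductSpace

theorem stmt_15 {H : Type*} [NormedAddCommGroup H] [InnerProductSpace ℂ H] [CompleteSpace H]
    (Q : HilbertBasis ℕ ℂ H)
    (d : ℕ → ℂ) (hdne : ∀ n, d n ≠ 0) (hdnc : ∃ m n, d m ≠ d n)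
    (T : H →ₗ.[ℂ] H)
    (hdom : T.domain = Submodule.span ℂ (Set.range fun n => Q n))
    (hQ : ∀ n, Q n ∈ T.domain)
    (hT : ∀ k, T ⟨Q k, hQ k⟩ =
      d k • Q k + ∑ t ∈ Finset.range k, (d t - d (t + 1)) • Q t) :
    (∀ j : ℕ, Q j ∈ T.adjoint.domain ↔ d j = d (j + 1)) ∧
    ¬ ∃ C : ℝ, ∀ f : T.domain, ‖T f‖ ≤ C * ‖(f : H)‖ := by
  classical
  have horth := Q.orthonormal
  have hinner : ∀ i j : ℕ, ⟪Q i, Q j⟫_ℂ = if i = j then 1 else 0 := fun i j =>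
    orthonormal_iff_ite.mp horth i j
  -- inner products with images of basis vectors
  have hA : ∀ j k : ℕ, ⟪Q j, (T ⟨Q k, hQ k⟩ : H)⟫_ℂ =
      if j = k then d k else if j < k then d j - d (j + 1) else 0 := by
    intro j k
    rw [hT k, inner_add_right, inner_smul_right, inner_sum]
    simp only [inner_smul_right, hinner, mul_ite, mul_one, mul_zero,
      Finset.sum_ite_eq, Finset.mem_range]
    by_cases h1 : j = k
    · subst h1; simp
    · simp [h1]
  -- the key unboundedness statement
  have hkey : ∀ j : ℕ, d j ≠ d (j + 1) → ∀ C : ℝ,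
      ∃ x : T.domain, C * ‖(x : H)‖ < ‖⟪Q j, (T x : H)⟫_ℂ‖ := by
    intro j hne C
    have hc0 : d j - d (j + 1) ≠ 0 := sub_ne_zero.mpr hne
    have hcpos : 0 < ‖d j - d (j + 1)‖ := norm_pos_iff.mpr hc0
    obtain ⟨N, hN⟩ : ∃ N : ℕ, (max C 0 / ‖d j - d (j + 1)‖) ^ 2 < N := exists_nat_gt _
    have hN0 : (0 : ℝ) < N := lt_of_le_of_lt (by positivity) hN
    set s : Finset ℕ := Finset.Ico (j + 1) (j + 1 + N) with hs
    have hcard : s.card = N := by simp [hs]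
    refine ⟨∑ k ∈ s, ⟨Q k, hQ k⟩, ?_⟩
    have hxc : ((∑ k ∈ s, (⟨Q k, hQ k⟩ : T.domain) : T.domain) : H) = ∑ k ∈ s, Q k := by
      push_cast; rfl
    have hTx : (T (∑ k ∈ s, ⟨Q k, hQ k⟩) : H) = ∑ k ∈ s, (T ⟨Q k, hQ k⟩ : H) :=
      map_sum T.toFun _ s
    have hin : ⟪Q j, (T (∑ k ∈ s, ⟨Q k, hQ k⟩) : H)⟫_ℂ = (N : ℂ) * (d j - d (j + 1)) := by
      rw [hTx, inner_sum]
      have : ∀ k ∈ s, ⟪Q j, (T ⟨Q k, hQ k⟩ : H)⟫_ℂ = d j - d (j + 1) := by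
        intro k hk
        rw [Finset.mem_Ico] at hk
        have hjk : j < k := lt_of_lt_of_le (Nat.lt_succ_self j) hk.1
        rw [hA]
        simp [Nat.ne_of_lt hjk, hjk]
      rw [Finset.sum_congr rfl this, Finset.sum_const, hcard, nsmul_eq_mul]
    have hnormx : ‖((∑ k ∈ s, (⟨Q k, hQ k⟩ : T.domain) : T.domain) : H)‖ = Real.sqrt N := by
      have hip : ⟪(∑ k ∈ s, Q k : H), (∑ k ∈ s, Q k : H)⟫_ℂ = (N : ℂ) := by
        rw [sum_inner]
        have : ∀ k ∈ s, ⟪Q k, (∑ l ∈ s, Q l : H)⟫_ℂ = 1 := by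
          intro k hk
          rw [inner_sum]
          simp [hinner, Finset.sum_ite_eq, hk]
        rw [Finset.sum_congr rfl this, Finset.sum_const, hcard, nsmul_eq_mul, mul_one]
      rw [hxc]
      have h3 : ‖(∑ k ∈ s, Q k : H)‖ ^ 2 = (N : ℝ) := by
        rw [inner_self_eq_norm_sq_to_K (𝕜 := ℂ)] at hip
        have hip' : ((‖(∑ k ∈ s, Q k : H)‖ ^ 2 : ℝ) : ℂ) = (((N : ℝ)) : ℂ) := by
          push_cast
          exact hip
        exact_mod_cast Complex.ofReal_inj.mp hip'
      rw [← h3, Real.sqrt_sq (norm_nonneg _)]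
    rw [hin, hnormx]
    have hsq : Real.sqrt N * Real.sqrt N = (N : ℝ) := Real.mul_self_sqrt (le_of_lt hN0)
    have hsqpos : 0 < Real.sqrt N := Real.sqrt_pos.mpr hN0
    have hlt : max C 0 / ‖d j - d (j + 1)‖ < Real.sqrt N := by
      have := Real.sqrt_lt_sqrt (by positivity) hN
      rwa [Real.sqrt_sq (by positivity)] at this
    have hCle : C ≤ max C 0 := le_max_left _ _
    have hnormin : ‖(N : ℂ) * (d j - d (j + 1))‖ = (N : ℝ) * ‖d j - d (j + 1)‖ := by
      rw [norm_mul]; norm_num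
    rw [hnormin]
    have h4 : max C 0 < Real.sqrt N * ‖d j - d (j + 1)‖ := by
      rw [div_lt_iff₀ hcpos] at hlt; linarith
    nlinarith [mul_le_mul_of_nonneg_right hCle (le_of_lt hsqpos)]
  -- the formal adjoint computation when d j = d (j+1)
  have hformal : ∀ j : ℕ, d j = d (j + 1) →
      ∀ x : T.domain, ⟪Q j, (T x : H)⟫_ℂ = d j * ⟪Q j, (x : H)⟫_ℂ := by
    intro j hdj x
    obtain ⟨v, hv⟩ := x
    have hv' : v ∈ Submodule.span ℂ (Set.range fun n => Q n) := hdom ▸ hv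
    refine Submodule.span_induction
      (p := fun v _ => ∀ hv : v ∈ T.domain, ⟪Q j, (T ⟨v, hv⟩ : H)⟫_ℂ = d j * ⟪Q j, v⟫_ℂ)
      ?_ ?_ ?_ ?_ hv' hv
    · rintro _ ⟨n, rfl⟩ hmem
      rw [hA j n, hinner]
      by_cases h1 : j = n
      · subst h1; simp
      · by_cases h2 : j < n
        · simp [h1, h2, sub_eq_zero.mpr hdj]
        · simp [h1, h2]
    · intro hmem
      have : (⟨0, hmem⟩ : T.domain) = 0 := rfl
      rw [this, T.map_zero]
      simp
    · intro x y hx hy ihx ihy hmem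
      have hxd : x ∈ T.domain := hdom ▸ hx
      have hyd : y ∈ T.domain := hdom ▸ hy
      have : (⟨x + y, hmem⟩ : T.domain) = ⟨x, hxd⟩ + ⟨y, hyd⟩ := rfl
      rw [this, T.map_add, inner_add_right, ihx hxd, ihy hyd, inner_add_right]
      ring
    · intro a x hx ihx hmem
      have hxd : x ∈ T.domain := hdom ▸ hx
      have : (⟨a • x, hmem⟩ : T.domain) = a • ⟨x, hxd⟩ := rfl
      rw [this, T.map_smul, inner_smul_right, ihx hxd, inner_smul_right]
      ring
  constructor
  · intro j
    constructor
    · intro hmem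
      by_contra hne
      rw [T.mem_adjoint_domain_iff] at hmem
      set L : T.domain →L[ℂ] ℂ := ⟨(innerₛₗ ℂ (Q j)).comp T.toFun, hmem⟩ with hL
      obtain ⟨x, hx⟩ := hkey j hne ‖L‖
      have hLx : L x = ⟪Q j, (T x : H)⟫_ℂ := rfl
      have h2 : ‖⟪Q j, (T x : H)⟫_ℂ‖ ≤ ‖L‖ * ‖(x : H)‖ := by
        rw [← hLx]; exact L.le_opNorm x
      linarith
    · intro hdj
      apply LinearPMap.mem_adjoint_domain_of_exists
      refine ⟨(starRingEnd ℂ (d j)) • Q j, fun x => ?_⟩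
      rw [inner_smul_left, hformal j hdj x]
      simp
  · rintro ⟨C, hC⟩
    obtain ⟨j, hne⟩ : ∃ j, d j ≠ d (j + 1) := by
      by_contra h
      push_neg at h
      obtain ⟨m, n, hmn⟩ := hdnc
      have hconst : ∀ k, d k = d 0 := by
        intro k
        induction k with
        | zero => rfl
        | succ k ih => rw [← h k]; exact ih
      exact hmn ((hconst m).trans (hconst n).symm)
    obtain ⟨x, hx⟩ := hkey j hne C
    have h1 : ‖⟪Q j, (T x : H)⟫_ℂ‖ ≤ ‖Q j‖ * ‖(T x : H)‖ := norm_inner_le_norm _ _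
    rw [horth.1 j, one_mul] at h1
    exact absurd (le_trans h1 (hC x)) (not_le.mpr hx)
end

section
/- Let (q̃_k) be an orthonormal basis of a Hilbert space, (d_k) a sequence of nonzero complex scalars, (r_k) positive reals with (1/r_k) ∈ ℓ², and T the operator with domain span{q̃_k} defined by T(q̃_k) = d_k q̃_k + Σ_{t=0}^{k−1} (d_t − d_{t+1}) (r_t/r_k) q̃_t. Then every basis vector q̃_s lies in D(T*), D(T*) is dense, and T is closable; moreover T*(q̃_s) = d̄_s q̃_s + Σ_{k=s+1}^∞ (d̄_s − d̄_{s+1}) (r_s/r_k) q̃_k. -/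
open scoped InnerProductSpace ComplexConjugate

theorem stmt_16 {H : Type*} [NormedAddCommGroup H] [InnerProductSpace ℂ H] [CompleteSpace H]
    (Q : HilbertBasis ℕ ℂ H)
    (d : ℕ → ℂ) (hdne : ∀ n, d n ≠ 0)
    (r : ℕ → ℝ) (hrpos : ∀ k, 0 < r k) (hr : Summable fun k : ℕ => (1 / r k) ^ 2)
    (T : H →ₗ.[ℂ] H)
    (hdom : T.domain = Submodule.span ℂ (Set.range fun n => Q n))
    (hQ : ∀ n, Q n ∈ T.domain)
    (hT : ∀ k, T ⟨Q k, hQ k⟩ =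
      d k • Q k +
        ∑ t ∈ Finset.range k, ((d t - d (t + 1)) * ((r t / r k : ℝ) : ℂ)) • Q t) :
    (∀ s : ℕ, Q s ∈ T.adjoint.domain) ∧
    Dense (T.adjoint.domain : Set H) ∧
    T.IsClosable ∧
    ∀ (s : ℕ) (hs : Q s ∈ T.adjoint.domain),
      T.adjoint ⟨Q s, hs⟩ =
        conj (d s) • Q s +
          ∑' k : ℕ, (if s < k then
              (conj (d s) - conj (d (s + 1))) * ((r s / r k : ℝ) : ℂ) else 0) • Q k := by
  classical
  have hOrth := Q.orthonormal
  have hite : ∀ i j : ℕ, ⟪(Q i : H), (Q j : H)⟫_ℂ = if i = j then 1 else 0 :=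
    orthonormal_iff_ite.mp hOrth
  have hTdense : Dense (T.domain : Set H) := by
    rw [hdom, Submodule.dense_iff_topologicalClosure_eq_top]
    exact Q.dense_span
  have htop : Submodule.span ℂ (Set.range fun k => (⟨Q k, hQ k⟩ : T.domain)) = ⊤ := by
    apply Submodule.map_injective_of_injective T.domain.injective_subtype
    rw [Submodule.map_span, Submodule.map_top, Submodule.range_subtype]
    have himg : T.domain.subtype '' Set.range (fun k => (⟨Q k, hQ k⟩ : T.domain))
        = Set.range fun n => (Q n : H) := by
      ext x
      constructor
      · rintro ⟨y, ⟨k, rfl⟩, rfl⟩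
        exact ⟨k, rfl⟩
      · rintro ⟨k, rfl⟩
        exact ⟨⟨Q k, hQ k⟩, ⟨k, rfl⟩, rfl⟩
    rw [himg, hdom]
  have main : ∀ s : ℕ, ∃ w : H,
      w = conj (d s) • (Q s : H) + ∑' k : ℕ, (if s < k then
          (conj (d s) - conj (d (s + 1))) * ((r s / r k : ℝ) : ℂ) else 0) • Q k ∧
      ∀ x : T.domain, ⟪w, (x : H)⟫_ℂ = ⟪(Q s : H), (T x : H)⟫_ℂ := by
    intro s
    set g : ℕ → ℂ := fun k => if s < k then
        (conj (d s) - conj (d (s + 1))) * ((r s / r k : ℝ) : ℂ) else 0 with hg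
    have hgnorm : ∀ k, s < k → ‖g k‖ = ‖d s - d (s + 1)‖ * (r s / r k) := by
      intro k h
      rw [hg]
      simp only [if_pos h, norm_mul, Complex.norm_real, Real.norm_eq_abs]
      rw [← map_sub (starRingEnd ℂ), RCLike.norm_conj,
        abs_of_pos (div_pos (hrpos s) (hrpos k))]
    have hnorm : Summable fun k : ℕ => ‖g k‖ ^ 2 := by
      refine Summable.of_nonneg_of_le (fun k => sq_nonneg _) (fun k => ?_)
        (hr.mul_left ((‖d s - d (s + 1)‖ * r s) ^ 2))
      by_cases h : s < k
      · rw [hgnorm k h]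
        refine le_of_eq ?_
        have hk := (hrpos k).ne'
        field_simp
      · have hz : g k = 0 := if_neg h
        rw [hz, norm_zero, zero_pow two_ne_zero]
        positivity
    have hgsum : Summable fun k : ℕ => g k • (Q k : H) := by
      have := (hOrth.orthogonalFamily.summable_iff_norm_sq_summable g).mpr hnorm
      simpa [LinearIsometry.toSpanSingleton_apply] using this
    have htsum_inner : ∀ k : ℕ, ⟪(Q k : H), ∑' j : ℕ, g j • (Q j : H)⟫_ℂ = g k := by
      intro k
      have hterm : ∀ j, (innerSL ℂ (Q k : H)) (g j • (Q j : H)) = if k = j then g j else 0 := by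
        intro j
        simp only [innerSL_apply_apply, inner_smul_right, hite k j]
        split_ifs <;> simp
      rw [show ⟪(Q k : H), ∑' j : ℕ, g j • (Q j : H)⟫_ℂ
            = (innerSL ℂ (Q k : H)) (∑' j : ℕ, g j • (Q j : H)) from rfl,
        (innerSL ℂ (Q k : H)).map_tsum hgsum, tsum_congr hterm,
        tsum_eq_single k (fun j hj => if_neg fun h => hj h.symm), if_pos rfl]
    have hconjg : ∀ k, conj (g k) =
        if s < k then (d s - d (s + 1)) * ((r s / r k : ℝ) : ℂ) else 0 := by
      intro k
      by_cases h : s < k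
      · rw [show g k = (conj (d s) - conj (d (s + 1))) * ((r s / r k : ℝ) : ℂ) from if_pos h,
          if_pos h]
        simp [map_mul, map_sub, Complex.conj_conj, Complex.conj_ofReal]
      · rw [show g k = 0 from if_neg h, if_neg h, map_zero]
    refine ⟨_, rfl, ?_⟩
    set w : H := conj (d s) • (Q s : H) + ∑' k : ℕ, g k • (Q k : H) with hwdef
    have hwQ : ∀ k : ℕ, ⟪w, (Q k : H)⟫_ℂ = ⟪(Q s : H), (T ⟨Q k, hQ k⟩ : H)⟫_ℂ := by
      intro k
      have hL : ⟪w, (Q k : H)⟫_ℂ = (if s = k then d s else 0) + conj (g k) := by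
        rw [hwdef, inner_add_left, inner_smul_left, hite s k,
          ← inner_conj_symm (∑' j : ℕ, g j • (Q j : H)) ((Q k : H)), htsum_inner k]
        congr 1
        by_cases h : s = k <;> simp [h]
      have hR : ⟪(Q s : H), (T ⟨Q k, hQ k⟩ : H)⟫_ℂ
          = (if s = k then d s else 0) + conj (g k) := by
        rw [hT k, inner_add_right, inner_smul_right, hite s k, inner_sum]
        simp only [inner_smul_right, hite, mul_ite, mul_one, mul_zero]
        simp only [Finset.sum_ite_eq, Finset.mem_range]
        rw [hconjg k]
        congr 1
        by_cases h : s = k <;> simp [h]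
      rw [hL, hR]
    let φ : T.domain →ₗ[ℂ] ℂ := (innerₛₗ ℂ w).comp T.domain.subtype
    let ψ : T.domain →ₗ[ℂ] ℂ := (innerₛₗ ℂ (Q s : H)).comp T.toFun
    have hφψ : φ = ψ := by
      refine LinearMap.ext_on htop ?_
      rintro _ ⟨k, rfl⟩
      exact hwQ k
    intro x
    exact LinearMap.congr_fun hφψ x
  choose w hw1 hw2 using main
  have hmem : ∀ s : ℕ, Q s ∈ T.adjoint.domain := fun s =>
    LinearPMap.mem_adjoint_domain_of_exists _ ⟨w s, hw2 s⟩
  have hdense : Dense (T.adjoint.domain : Set H) := by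
    have hsub : (Submodule.span ℂ (Set.range fun n => (Q n : H)) : Set H)
        ⊆ (T.adjoint.domain : Set H) := by
      refine Submodule.span_le.mpr ?_
      rintro _ ⟨k, rfl⟩
      exact hmem k
    have hds : Dense (Submodule.span ℂ (Set.range fun n => (Q n : H)) : Set H) := by
      rw [Submodule.dense_iff_topologicalClosure_eq_top]
      exact Q.dense_span
    exact hds.mono hsub
  have hzero : ∀ x ∈ T.graph.topologicalClosure, x.fst = 0 → x.snd = 0 := by
    intro x hx hx0
    have hinner : ∀ s : ℕ, ⟪(Q s : H), x.snd⟫_ℂ = 0 := by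
      intro s
      have hclosed : IsClosed {p : H × H | ⟪(Q s : H), p.2⟫_ℂ = ⟪w s, p.1⟫_ℂ} :=
        isClosed_eq (Continuous.inner continuous_const continuous_snd)
          (Continuous.inner continuous_const continuous_fst)
      have hsubC : (T.graph : Set (H × H)) ⊆ {p : H × H | ⟪(Q s : H), p.2⟫_ℂ = ⟪w s, p.1⟫_ℂ} := by
        rintro p hp
        rw [SetLike.mem_coe, LinearPMap.mem_graph_iff] at hp
        obtain ⟨y, h1, h2⟩ := hp
        simp only [Set.mem_setOf_eq, ← h1, ← h2]
        exact (hw2 s y).symm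
      have hxC : x ∈ {p : H × H | ⟪(Q s : H), p.2⟫_ℂ = ⟪w s, p.1⟫_ℂ} := by
        have hx' : x ∈ closure (T.graph : Set (H × H)) := by
          rw [← Submodule.topologicalClosure_coe]
          exact hx
        exact closure_minimal hsubC hclosed hx'
      rw [Set.mem_setOf_eq] at hxC
      rw [hxC, hx0, inner_zero_right]
    have hrepr : Q.repr x.snd = 0 := by
      ext k
      rw [Q.repr_apply_apply, hinner k]
      simp
    exact Q.repr.map_eq_zero_iff.mp hrepr
  have hclosable : T.IsClosable :=
    ⟨T.graph.topologicalClosure.toLinearPMap, (Submodule.toLinearPMap_graph_eq _ hzero).symm⟩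
  refine ⟨hmem, hdense, hclosable, ?_⟩
  intro s hs
  refine LinearPMap.adjoint_apply_eq hTdense ⟨Q s, hs⟩ ?_
  intro x
  rw [← hw1 s]
  exact hw2 s x
end

section
/- Let T be the operator of the previous setting (T(q_k) = d_k q_k + (d_k − d_{k−1}) Σ_{t<k} q_t on an orthonormal basis (q_k)), and suppose (f,g) lies in the closure of the graph of T. Then for every k ≥ 1, g_k = g_0 − f_0 d_0 + f_k d_k − Σ_{u=1}^k f_u (d_u − d_{u−1}), where f_j = ⟨f, q_j⟩, g_j = ⟨g, q_j⟩. -/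
open scoped InnerProductSpace

theorem stmt_18 {H : Type*} [NormedAddCommGroup H] [InnerProductSpace ℂ H] [CompleteSpace H]
    (Q : HilbertBasis ℕ ℂ H)
    (d : ℕ → ℂ) (hdne : ∀ n, d n ≠ 0) (hdnc : ∃ m n, d m ≠ d n)
    (T : H →ₗ.[ℂ] H)
    (hdom : T.domain = Submodule.span ℂ (Set.range fun n => Q n))
    (hQ : ∀ n, Q n ∈ T.domain)
    (hT : ∀ k, T ⟨Q k, hQ k⟩ =
      d k • Q k +
        ∑ t ∈ Finset.range k, (d k - (if k = 0 then 0 else d (k - 1))) • Q t)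
    (f g : H) (hfg : (f, g) ∈ closure (T.graph : Set (H × H))) :
    ∀ k : ℕ, 1 ≤ k →
      (⟪Q k, g⟫_ℂ : ℂ) =
        ⟪Q 0, g⟫_ℂ - ⟪Q 0, f⟫_ℂ * d 0 + ⟪Q k, f⟫_ℂ * d k -
          ∑ u ∈ Finset.Icc 1 k, (⟪Q u, f⟫_ℂ : ℂ) * (d u - d (u - 1)) := by
  intro k hk
  have horth : ∀ i j, (⟪Q i, Q j⟫_ℂ : ℂ) = if i = j then 1 else 0 :=
    orthonormal_iff_ite.mp Q.orthonormal
  set S : Set (H × H) := {p : H × H |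
    (⟪Q k, p.2⟫_ℂ : ℂ) = ⟪Q 0, p.2⟫_ℂ - ⟪Q 0, p.1⟫_ℂ * d 0 + ⟪Q k, p.1⟫_ℂ * d k -
      ∑ u ∈ Finset.Icc 1 k, (⟪Q u, p.1⟫_ℂ : ℂ) * (d u - d (u - 1))} with hS
  have hclosed : IsClosed S := by
    apply isClosed_eq
    · exact continuous_const.inner continuous_snd
    · apply Continuous.sub
      apply Continuous.add
      apply Continuous.sub
      · exact continuous_const.inner continuous_snd
      · exact (continuous_const.inner continuous_fst).mul continuous_const
      · exact (continuous_const.inner continuous_fst).mul continuous_const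
      · exact continuous_finset_sum _ fun u _ =>
          (continuous_const.inner continuous_fst).mul continuous_const
  have key : ∀ (v : H), v ∈ Submodule.span ℂ (Set.range fun n => Q n) →
      ∀ hv' : v ∈ T.domain,
      (⟪Q k, T ⟨v, hv'⟩⟫_ℂ : ℂ) =
        ⟪Q 0, T ⟨v, hv'⟩⟫_ℂ - ⟪Q 0, v⟫_ℂ * d 0 + ⟪Q k, v⟫_ℂ * d k -
          ∑ u ∈ Finset.Icc 1 k, (⟪Q u, v⟫_ℂ : ℂ) * (d u - d (u - 1)) := by
    intro v hv
    induction hv using Submodule.span_induction with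
    | mem v hv =>
      obtain ⟨n, rfl⟩ := hv
      intro hv'
      have he : (⟨Q n, hv'⟩ : T.domain) = ⟨Q n, hQ n⟩ := rfl
      rw [he, hT n]
      simp only [inner_add_right, inner_smul_right, inner_sum, horth, mul_ite, mul_one,
        mul_zero, ite_mul, zero_mul, one_mul, Finset.sum_ite_eq, Finset.sum_ite_eq',
        Finset.mem_range, Finset.mem_Icc]
      split_ifs <;> try omega
      all_goals subst_vars
      all_goals ring
    | zero =>
      intro hv'
      have he : (⟨(0:H), hv'⟩ : T.domain) = 0 := rfl
      simp [he]
    | add x y hx hy ihx ihy =>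
      intro hv'
      have hx' : x ∈ T.domain := hdom ▸ hx
      have hy' : y ∈ T.domain := hdom ▸ hy
      have he : (⟨x + y, hv'⟩ : T.domain) = ⟨x, hx'⟩ + ⟨y, hy'⟩ := rfl
      rw [he, T.map_add]
      simp only [inner_add_right]
      have hsum2 : ∑ u ∈ Finset.Icc 1 k,
          ((⟪Q u, x⟫_ℂ : ℂ) + ⟪Q u, y⟫_ℂ) * (d u - d (u - 1)) =
          (∑ u ∈ Finset.Icc 1 k, (⟪Q u, x⟫_ℂ : ℂ) * (d u - d (u - 1))) +
          ∑ u ∈ Finset.Icc 1 k, (⟪Q u, y⟫_ℂ : ℂ) * (d u - d (u - 1)) := by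
        rw [← Finset.sum_add_distrib]
        exact Finset.sum_congr rfl fun u _ => by ring
      rw [ihx hx', ihy hy', hsum2]
      ring
    | smul c x hx ihx =>
      intro hv'
      have hx' : x ∈ T.domain := hdom ▸ hx
      have he : (⟨c • x, hv'⟩ : T.domain) = c • (⟨x, hx'⟩ : T.domain) := rfl
      rw [he, T.map_smul]
      simp only [inner_smul_right]
      have hsum2 : ∑ u ∈ Finset.Icc 1 k,
          c * (⟪Q u, x⟫_ℂ : ℂ) * (d u - d (u - 1)) =
          c * ∑ u ∈ Finset.Icc 1 k, (⟪Q u, x⟫_ℂ : ℂ) * (d u - d (u - 1)) := by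
        rw [Finset.mul_sum]
        exact Finset.sum_congr rfl fun u _ => by ring
      rw [ihx hx', hsum2]
      ring
  have hsub : (T.graph : Set (H × H)) ⊆ S := by
    rintro ⟨a, b⟩ hp
    rw [SetLike.mem_coe, LinearPMap.mem_graph_iff] at hp
    obtain ⟨y, hy1, hy2⟩ := hp
    simp only [hS, Set.mem_setOf_eq]
    simp only at hy1 hy2
    subst hy1 hy2
    have := key ↑y (hdom ▸ y.2) y.2
    simpa using this
  exact closure_minimal hsub hclosed hfg
end

section
/- With T as above, let f ∈ H satisfy: (i) S := Σ_{u=1}^∞ f_u (d_u − d_{u−1}) converges, (ii) the sequence g defined by g_0 = S + f_0 d_0, g_k = S − Σ_{u=1}^k f_u(d_u − d_{u−1}) + f_k d_k (k ≥ 1) is in ℓ², and (iii) (n+1)|f_n d_n − g_n|² → 0 as n → ∞. Then f ∈ D(T̄) and T̄ f = Σ_k g_k q_k, where T̄ is the closure of T. -/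
open scoped InnerProductSpace
open Filter

private lemma orthon_norm_sq_sum {H : Type*} [NormedAddCommGroup H] [InnerProductSpace ℂ H]
    {v : ℕ → H} (hv : Orthonormal ℂ v) (c : ℕ → ℂ) (s : Finset ℕ) :
    ‖∑ i ∈ s, c i • v i‖ ^ 2 = ∑ i ∈ s, ‖c i‖ ^ 2 := by
  classical
  have h : (⟪∑ i ∈ s, c i • v i, ∑ j ∈ s, c j • v j⟫_ℂ) = ∑ j ∈ s, ((‖c j‖ : ℂ)) ^ 2 := by
    rw [inner_sum]
    refine Finset.sum_congr rfl fun j hj => ?_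
    rw [sum_inner]
    simp only [inner_smul_left, inner_smul_right, orthonormal_iff_ite.mp hv, mul_ite, mul_one,
      mul_zero, Finset.sum_ite_eq', hj, if_pos]
    rw [RCLike.mul_conj]; norm_cast
  rw [inner_self_eq_norm_sq_to_K (𝕜 := ℂ)] at h
  have := congrArg Complex.re h
  simpa [← Complex.ofReal_pow] using this

theorem stmt_19 {H : Type*} [NormedAddCommGroup H] [InnerProductSpace ℂ H] [CompleteSpace H]
    (Q : HilbertBasis ℕ ℂ H)
    (d : ℕ → ℂ) (hdne : ∀ n, d n ≠ 0) (hdnc : ∃ m n, d m ≠ d n)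
    (T : H →ₗ.[ℂ] H)
    (hdom : T.domain = Submodule.span ℂ (Set.range fun n => Q n))
    (hQ : ∀ n, Q n ∈ T.domain)
    (hT : ∀ k, T ⟨Q k, hQ k⟩ =
      d k • Q k +
        ∑ t ∈ Finset.range k, (d k - (if k = 0 then 0 else d (k - 1))) • Q t)
    (hclosable : T.IsClosable)
    (f : H) (S : ℂ)
    -- (i)  `S = ∑_{u≥1} f_u (d_u − d_{u−1})` converges
    (hS : Tendsto (fun n : ℕ => ∑ u ∈ Finset.Icc 1 n, (⟪Q u, f⟫_ℂ : ℂ) * (d u - d (u - 1)))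
      atTop (nhds S))
    (g : ℕ → ℂ)
    (hg0 : g 0 = S + (⟪Q 0, f⟫_ℂ : ℂ) * d 0)
    (hgk : ∀ k : ℕ, 1 ≤ k →
      g k = S - ∑ u ∈ Finset.Icc 1 k, (⟪Q u, f⟫_ℂ : ℂ) * (d u - d (u - 1)) +
        (⟪Q k, f⟫_ℂ : ℂ) * d k)
    -- (ii)  `g ∈ ℓ²`
    (hg2 : Summable fun k : ℕ => ‖g k‖ ^ 2)
    -- (iii)  `(n+1)|fₙ dₙ − gₙ|² → 0`
    (hlim : Tendsto (fun n : ℕ => ((n : ℝ) + 1) * ‖(⟪Q n, f⟫_ℂ : ℂ) * d n - g n‖ ^ 2)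
      atTop (nhds 0)) :
    ∃ hf : f ∈ T.closure.domain, T.closure ⟨f, hf⟩ = ∑' k : ℕ, g k • Q k := by
  classical
  set fk : ℕ → ℂ := fun k => (⟪Q k, f⟫_ℂ : ℂ) with hfk
  set fc : ℕ → ℂ := fun u => fk u * (d u - d (u - 1)) with hfc
  set r : ℕ → ℂ := fun n => S - ∑ u ∈ Finset.Icc 1 n, fc u with hr
  -- g n = fk n * d n + r n
  have hgr : ∀ n, g n = fk n * d n + r n := by
    intro n
    rcases Nat.eq_zero_or_pos n with rfl | hn
    · simp only [hr, hfc, Finset.Icc_self]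
      rw [hg0]
      simp [add_comm, hfk]
    · rw [hgk n hn, hr]
      ring
  -- r → 0
  have hr0 : Tendsto r atTop (nhds 0) := by
    have := tendsto_const_nhds (x := S) (f := atTop (α := ℕ)) |>.sub hS
    simpa using this
  -- the limit vector y
  have hmem : Memℓp g 2 := by
    apply memℓp_gen
    have h2 : ((2 : ENNReal).toReal) = ((2 : ℕ) : ℝ) := by norm_num
    have : (fun i => ‖g i‖ ^ ((2 : ENNReal).toReal)) = fun i => ‖g i‖ ^ (2 : ℕ) := by
      funext i; rw [h2, Real.rpow_natCast]
    rw [this]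
    exact hg2
  set glp : lp (fun _ : ℕ => ℂ) 2 := ⟨g, hmem⟩ with hglp
  set y : H := Q.repr.symm glp with hy'
  have hy : HasSum (fun k => g k • Q k) y := Q.hasSum_repr_symm glp
  -- approximating sequence
  set x : ℕ → H := fun n => ∑ k ∈ Finset.range (n + 1), fk k • Q k with hx'
  have hx : ∀ n, x n ∈ T.domain := by
    intro n
    rw [hdom]
    exact Submodule.sum_mem _ fun k _ =>
      Submodule.smul_mem _ _ (Submodule.subset_span ⟨k, rfl⟩)
  have hxf : Tendsto x atTop (nhds f) := by
    have h1 : HasSum (fun i => fk i • Q i) f := by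
      have := Q.hasSum_repr f
      simpa [Q.repr_apply_apply, hfk] using this
    exact h1.tendsto_sum_nat.comp (tendsto_add_atTop_nat 1)
  -- key computation of T on partial sums
  have key : ∀ n : ℕ, T ⟨x n, hx n⟩ =
      (∑ t ∈ Finset.range (n + 1), g t • Q t) - r n • ∑ t ∈ Finset.range (n + 1), Q t := by
    intro n
    have h1 : (⟨x n, hx n⟩ : T.domain) =
        ∑ k ∈ Finset.range (n + 1), fk k • (⟨Q k, hQ k⟩ : T.domain) := by
      apply Subtype.ext
      push_cast
      rfl
    have h2 : T ⟨x n, hx n⟩ = ∑ k ∈ Finset.range (n + 1), fk k • T ⟨Q k, hQ k⟩ := by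
      rw [h1]
      show T.toFun _ = _
      rw [map_sum]
      simp only [LinearMap.map_smul]
      rfl
    rw [h2]
    simp only [hT, smul_add, Finset.smul_sum, smul_smul]
    rw [Finset.sum_add_distrib]
    have hswap : ∀ (F : ℕ → ℕ → H),
        (∑ k ∈ Finset.range (n + 1), ∑ t ∈ Finset.range k, F k t) =
          ∑ t ∈ Finset.range (n + 1), ∑ k ∈ Finset.Ioc t n, F k t := by
      intro F
      apply Finset.sum_comm'
      intro k t
      simp only [Finset.mem_range, Finset.mem_Ioc]
      omega
    rw [hswap]
    have h3 : ∀ t ∈ Finset.range (n + 1),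
        (∑ k ∈ Finset.Ioc t n, (fk k * (d k - if k = 0 then 0 else d (k - 1))) • Q t)
          = (r t - r n) • Q t := by
      intro t ht
      rw [← Finset.sum_smul]
      congr 1
      have htn : t ≤ n := by simpa [Nat.lt_succ_iff] using ht
      have hioc : ∀ k ∈ Finset.Ioc t n,
          fk k * (d k - if k = 0 then 0 else d (k - 1)) = fc k := by
        intro k hk
        have : k ≠ 0 := by
          have := (Finset.mem_Ioc.mp hk).1; omega
        simp [hfc, this]
      rw [Finset.sum_congr rfl hioc]
      have hc : (∑ u ∈ Finset.Ioc 0 t, fc u) + ∑ u ∈ Finset.Ioc t n, fc u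
          = ∑ u ∈ Finset.Ioc 0 n, fc u :=
        Finset.sum_Ioc_consecutive fc (Nat.zero_le t) htn
      have hIcc : ∀ m : ℕ, (∑ u ∈ Finset.Icc 1 m, fc u) = ∑ u ∈ Finset.Ioc 0 m, fc u := by
        intro m; rw [← Finset.Icc_add_one_left_eq_Ioc, zero_add]
      simp only [hr, hIcc]
      linear_combination hc
    have h4 := Finset.sum_congr rfl h3
    rw [h4, ← Finset.sum_add_distrib, ← Finset.sum_sub_distrib]
    refine Finset.sum_congr rfl fun t _ => ?_
    rw [← add_smul, ← sub_smul]
    congr 1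
    rw [hgr t]
    ring
  -- T (x n) → y
  have hgn2 : Tendsto (fun n : ℕ => ((n : ℝ) + 1) * ‖r n‖ ^ 2) atTop (nhds 0) := by
    have : ∀ n, ‖fk n * d n - g n‖ = ‖r n‖ := by
      intro n
      rw [hgr n]
      simp [sub_add_eq_sub_sub, norm_sub_rev]
    exact hlim.congr fun n => congrArg (fun z : ℝ => ((n : ℝ) + 1) * z ^ 2) (this n)
  have hw : Tendsto (fun n => r n • ∑ t ∈ Finset.range (n + 1), Q t) atTop (nhds 0) := by
    rw [tendsto_zero_iff_norm_tendsto_zero]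
    have hnorm : ∀ n : ℕ, ‖r n • ∑ t ∈ Finset.range (n + 1), Q t‖
        = Real.sqrt (((n : ℝ) + 1) * ‖r n‖ ^ 2) := by
      intro n
      rw [← Real.sqrt_sq (norm_nonneg _)]
      congr 1
      rw [Finset.smul_sum]
      rw [orthon_norm_sq_sum Q.orthonormal (fun _ => r n) (Finset.range (n + 1))]
      simp [mul_comm]
    simp only [hnorm]
    have h0 := (Real.continuous_sqrt.tendsto 0).comp hgn2
    rw [Real.sqrt_zero] at h0
    exact h0
  have hTx : Tendsto (fun n => T ⟨x n, hx n⟩) atTop (nhds y) := by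
    simp only [key]
    have hp : Tendsto (fun n : ℕ => ∑ t ∈ Finset.range (n + 1), g t • Q t) atTop (nhds y) :=
      hy.tendsto_sum_nat.comp (tendsto_add_atTop_nat 1)
    simpa using hp.sub hw
  -- pass to the closure
  have hmemcl : ((f, y) : H × H) ∈ T.closure.graph := by
    rw [← hclosable.graph_closure_eq_closure_graph]
    have : ((f, y) : H × H) ∈ closure (T.graph : Set (H × H)) := by
      refine mem_closure_of_tendsto (hxf.prodMk_nhds hTx) (Eventually.of_forall fun n => ?_)
      exact T.mem_graph ⟨x n, hx n⟩
    rwa [← SetLike.mem_coe, Submodule.topologicalClosure_coe]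
  rw [LinearPMap.mem_graph_iff] at hmemcl
  obtain ⟨v, hv1, hv2⟩ := hmemcl
  have hf : f ∈ T.closure.domain := by
    have hv := v.2
    rwa [hv1] at hv
  refine ⟨hf, ?_⟩
  have hv2' : T.closure v = y := hv2
  rw [hy.tsum_eq, ← hv2']
  congr 1
  exact Subtype.ext hv1.symm
end
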